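/- arXiv:1006.2628 — 6 statements merged into one kernel-verified Lean document; each statement's English description precedes it below -/
import Mathlib

section
/- Let n ≥ 2 and q ≥ 2. The edge clique cover number of the Hamming graph H(n,q) equals n·q^{n−1}; i.e., the minimum size of a family of cliques covering all edges of H(n,q) is n·q^{n−1}. -/
open SimpleGraph

/-- The Hamming graph H(n,q): vertices are `Fin n → Fin q`, adjacent iff Hamming distance 1. -/
def hammingGraph (n q : ℕ) : SimpleGraph (Fin n → Fin q) where
  Adj x y := hammingDist x y = 1
  symm := ⟨by intro x y h; rwa [hammingDist_comm]⟩
  loopless := ⟨by intro x h; simp [hammingDist_self] at h⟩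

/-- The competition graph of a digraph `D`. -/
def competitionGraph {V : Type*} (D : V → V → Prop) : SimpleGraph V where
  Adj u v := u ≠ v ∧ ∃ x, D u x ∧ D v x
  symm := ⟨by rintro u v ⟨h, x, hu, hv⟩; exact ⟨h.symm, x, hv, hu⟩⟩
  loopless := ⟨by rintro u ⟨h, _⟩; exact h rfl⟩

/-- A digraph is acyclic iff it has no directed cycle. -/
def IsAcyclicDigraph {V : Type*} (D : V → V → Prop) : Prop :=
  ∀ v, ¬ Relation.TransGen D v v

/-- `G` together with `k` isolated vertices. -/
def addIsolated {V : Type*} (G : SimpleGraph V) (k : ℕ) : SimpleGraph (V ⊕ Fin k) where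
  Adj x y := ∃ u v, x = Sum.inl u ∧ y = Sum.inl v ∧ G.Adj u v
  symm := ⟨by rintro x y ⟨u, v, rfl, rfl, h⟩; exact ⟨v, u, rfl, rfl, h.symm⟩⟩
  loopless := ⟨by rintro x ⟨u, v, rfl, h, hadj⟩; injection h with h; subst h; exact hadj.ne rfl⟩

/-- The competition number of a graph. -/
noncomputable def competitionNumber {V : Type*} (G : SimpleGraph V) : ℕ :=
  sInf {k | ∃ D : (V ⊕ Fin k) → (V ⊕ Fin k) → Prop,
    IsAcyclicDigraph D ∧ competitionGraph D = addIsolated G k}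

/-- The maximal clique `S_j(p)` of `H(n,q)`: all tuples agreeing with `p` off coordinate `j`. -/
def Sset {n q : ℕ} (j : Fin n) (p : Fin n → Fin q) : Set (Fin n → Fin q) :=
  {x | ∀ i, i ≠ j → x i = p i}

/-- A maximal clique of a graph. -/
def IsMaxClique {V : Type*} (G : SimpleGraph V) (S : Set V) : Prop :=
  G.IsClique S ∧ ∀ T, G.IsClique T → S ⊆ T → S = T

/-- An edge clique cover. -/
def IsEdgeCliqueCover {V : Type*} (G : SimpleGraph V) (F : Finset (Finset V)) : Prop :=
  (∀ S ∈ F, G.IsClique (S : Set V)) ∧ ∀ u v, G.Adj u v → ∃ S ∈ F, u ∈ S ∧ v ∈ S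

/-- In-neighborhood of a vertex in a digraph. -/
def inNbhd {V : Type*} (D : V → V → Prop) (v : V) : Set V := {w | D w v}

/-!
Two tuples are adjacent in `H(n, q)` exactly when they differ in a single coordinate `j`, and
then any clique through them lies in the line through them in direction `j` (a third vertex
differing from both in another coordinate would be at distance two from one of them). The
`n * q ^ (n - 1)` lines cover every edge. Conversely, fixing `a ≠ b` in `Fin q`, the edges
`{p, update p j b}` with `p j = a` are `n * q ^ (n - 1)` edges no two of which lie on a common
line, so no clique contains two of them.
-/

open Finset Function

section HammingDist

variable {ι : Type*} {β : ι → Type*} [Fintype ι] [∀ i, DecidableEq (β i)]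
  {x y : ∀ i, β i} {i j : ι}

theorem hammingDist_eq_one_of_ne_of_forall_ne_eq (hxy : x ≠ y) (h : ∀ i ≠ j, x i = y i) :
    hammingDist x y = 1 := by
  refine le_antisymm (card_le_one.2 fun k hk l hl => ?_) (hammingDist_pos.2 hxy)
  have eq_j : ∀ m, x m ≠ y m → m = j := fun m hm => by_contra fun hmj => hm (h m hmj)
  rw [eq_j k (mem_filter.1 hk).2, eq_j l (mem_filter.1 hl).2]

theorem apply_eq_of_hammingDist_eq_one (h : hammingDist x y = 1) (hi : x i ≠ y i) (hj : j ≠ i) :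
    x j = y j :=
  by_contra fun hxj => hj <| card_le_one.1 h.le j (by simpa using hxj) i (by simpa using hi)

theorem exists_forall_ne_eq_of_hammingDist_eq_one (h : hammingDist x y = 1) :
    ∃ j, ∀ i ≠ j, x i = y i := by
  obtain ⟨j, hj⟩ := Function.ne_iff.1 (hammingDist_pos.1 (h ▸ Nat.one_pos))
  exact ⟨j, fun i hi => apply_eq_of_hammingDist_eq_one h hj hi⟩

end HammingDist

namespace hammingGraph

variable {n q : ℕ} {j : Fin n} {p u v x : Fin n → Fin q}

def line (j : Fin n) (p : Fin n → Fin q) : Finset (Fin n → Fin q) := {x | ∀ i ≠ j, x i = p i}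

theorem mem_line : x ∈ line j p ↔ ∀ i ≠ j, x i = p i := by simp [line]

theorem line_update (b : Fin q) : line j (update p j b) = line j p := by
  ext x
  simp +contextual [mem_line, update_of_ne]

theorem eq_of_mem_line (hx : x ∈ line j p) (hj : x j = p j) : x = p :=
  funext fun i => if hi : i = j then hi ▸ hj else mem_line.1 hx i hi

theorem isClique_line : (hammingGraph n q).IsClique (line j p : Set (Fin n → Fin q)) :=
  fun _ hx _ hy hxy => hammingDist_eq_one_of_ne_of_forall_ne_eq hxy fun i hi =>
    (mem_line.1 hx i hi).trans (mem_line.1 hy i hi).symm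

theorem _root_.SimpleGraph.IsClique.subset_line {S : Set (Fin n → Fin q)}
    (hS : (hammingGraph n q).IsClique S) (hu : u ∈ S) (hv : v ∈ S) (huv : u ≠ v)
    (h : ∀ i ≠ j, u i = v i) : S ⊆ line j u := by
  intro w hw
  refine mem_line.2 fun i hi => by_contra fun hwu => huv ?_
  have hwv : w i ≠ v i := h i hi ▸ hwu
  have hwu_j : w j = u j :=
    apply_eq_of_hammingDist_eq_one (hS hw hu (ne_of_apply_ne (· i) hwu)) hwu hi.symm
  have hwv_j : w j = v j :=
    apply_eq_of_hammingDist_eq_one (hS hw hv (ne_of_apply_ne (· i) hwv)) hwv hi.symm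
  exact eq_of_mem_line (mem_line.2 h) (hwu_j.symm.trans hwv_j)

/-- Each line `line j p` has a unique base point `p` with `p j = b`. -/
def lineBases (b : Fin q) : Finset (Σ _ : Fin n, Fin n → Fin q) :=
  univ.sigma fun j => {p | p j = b}

theorem card_lineBases (b : Fin q) : #(lineBases (n := n) b) = n * q ^ (n - 1) := by
  simp only [lineBases, card_sigma]
  simp [← Fintype.piFinset_univ, Fintype.card_filter_piFinset_const_eq_of_mem]

def lineCover (b : Fin q) : Finset (Finset (Fin n → Fin q)) :=
  (lineBases b).image fun a => line a.1 a.2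

theorem isEdgeCliqueCover_lineCover (b : Fin q) :
    IsEdgeCliqueCover (hammingGraph n q) (lineCover b) := by
  refine ⟨fun S hS => ?_, fun u v huv => ?_⟩
  · obtain ⟨a, -, rfl⟩ := mem_image.1 hS
    exact isClique_line
  · obtain ⟨j, hj⟩ := exists_forall_ne_eq_of_hammingDist_eq_one huv
    refine ⟨line j (update u j b), mem_image.2 ⟨⟨j, update u j b⟩, ?_, rfl⟩, ?_, ?_⟩
    · simp [lineBases]
    · simp [line_update, mem_line]
    · simpa [line_update, mem_line, eq_comm] using hj

theorem card_lineBases_le_of_isEdgeCliqueCover {a b : Fin q} (hab : a ≠ b)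
    {F : Finset (Finset (Fin n → Fin q))} (hF : IsEdgeCliqueCover (hammingGraph n q) F) :
    #(lineBases (n := n) a) ≤ #F := by
  have marked_adj : ∀ c : Σ _ : Fin n, Fin n → Fin q, c ∈ lineBases a →
      (hammingGraph n q).Adj c.2 (update c.2 c.1 b) := by
    rintro ⟨j, p⟩ hc
    have hpa : p j = a := by simpa [lineBases] using hc
    refine hammingDist_eq_one_of_ne_of_forall_ne_eq (ne_of_apply_ne (· j) ?_)
      fun i hi => (update_of_ne hi _ _).symm
    simpa [hpa] using hab
  choose! S hSF hpS hbS using fun c hc => hF.2 _ _ (marked_adj c hc)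
  refine card_le_card_of_injOn S (fun c hc => hSF c hc) ?_
  rintro ⟨j, p⟩ hc ⟨k, r⟩ hd hS
  have hpa : p j = a := by simpa [lineBases] using hc
  have hra : r k = a := by simpa [lineBases] using hd
  have hline : (S ⟨j, p⟩ : Set (Fin n → Fin q)) ⊆ (line j p : Set (Fin n → Fin q)) :=
    (hF.1 _ (hSF _ hc)).subset_line (hpS _ hc) (hbS _ hc) (marked_adj _ hc).ne
      fun i hi => (update_of_ne hi _ _).symm
  have hr : r ∈ line j p := hline (hS ▸ hpS _ hd)
  have hrb : update r k b ∈ line j p := hline (hS ▸ hbS _ hd)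
  obtain rfl : k = j := by
    by_contra hkj
    have := (mem_line.1 hr k hkj).trans (mem_line.1 hrb k hkj).symm
    simp only [update_self] at this
    exact hab (hra.symm.trans this)
  rw [eq_of_mem_line hr (hra.trans hpa.symm)]

end hammingGraph

theorem hammingGraph_edge_clique_cover_number_general (n q : ℕ) (hq : 2 ≤ q) :
    sInf {m | ∃ F : Finset (Finset (Fin n → Fin q)),
      IsEdgeCliqueCover (hammingGraph n q) F ∧ F.card = m} = n * q ^ (n - 1) := by
  obtain ⟨a, b, hab⟩ : ∃ a b : Fin q, a ≠ b :=
    Fintype.exists_pair_of_one_lt_card (by rw [Fintype.card_fin]; omega)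
  rw [← hammingGraph.card_lineBases a]
  refine IsLeast.csInf_eq ⟨⟨hammingGraph.lineCover a, hammingGraph.isEdgeCliqueCover_lineCover a,
    le_antisymm card_image_le ?_⟩, ?_⟩
  · exact hammingGraph.card_lineBases_le_of_isEdgeCliqueCover hab
      (hammingGraph.isEdgeCliqueCover_lineCover a)
  · rintro m ⟨F, hF, rfl⟩
    exact hammingGraph.card_lineBases_le_of_isEdgeCliqueCover hab hF

theorem hammingGraph_edge_clique_cover_number (n q : ℕ) (hn : 2 ≤ n) (hq : 2 ≤ q) :
    sInf {m | ∃ F : Finset (Finset (Fin n → Fin q)),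
      IsEdgeCliqueCover (hammingGraph n q) F ∧ F.card = m} = n * q ^ (n - 1) :=
  hammingGraph_edge_clique_cover_number_general n q hq
end

section
/- Let G be a graph in which every edge is contained in exactly one maximal clique, let F be the family of all maximal cliques of G of size at least 2, and let k ≥ k(G) where k(G) is the competition number of G. Then there exists an acyclic digraph D such that: (a) the competition graph of D is G together with k isolated vertices; (b) for every vertex v of D, the in-neighborhood of v is either empty or a member of F; (c) the number of vertices of D with empty in-neighborhood equals k + |V(G)| − |F|. -/
open SimpleGraph

/-!
Start from an acyclic digraph `D₀` realising `k(G)`, and rank its vertices by their number of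
ancestors, which increases along every arc. For each maximal clique `S` with at least two
vertices pick, among the common prey of pairs of vertices of `S`, one of largest rank. Every
vertex of `S` has such a prey above itself, so the chosen prey lies strictly above all of `S`.
It also determines `S`: its in-neighbourhood is a clique containing an edge of `S`, hence lies in
the unique maximal clique through that edge. The digraph with an arc from every vertex of `S`
to its chosen prey, and no other arcs, is then acyclic because the rank increases, has
competition graph `G` plus isolated vertices because these cliques cover all edges, and its
vertices without in-neighbours are exactly those that are not a chosen prey.
-/

open Function

section Rank

variable {W : Type*} {D : W → W → Prop}

theorem isAcyclicDigraph_of_rank (h : W → ℕ) (hD : ∀ a b, D a b → h a < h b) :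
    IsAcyclicDigraph D := fun v hv => by
  have hlt := Relation.TransGen.lift h hD v v hv
  rw [Relation.transGen_eq_self] at hlt
  exact lt_irrefl _ hlt

theorem IsAcyclicDigraph.exists_rank [Finite W] (hD : IsAcyclicDigraph D) :
    ∃ h : W → ℕ, ∀ a b, D a b → h a < h b :=
  ⟨fun x => {y | Relation.TransGen D y x}.ncard, fun a b hab =>
    Set.ncard_lt_ncard ⟨fun _ hy => hy.tail hab, fun hsub => hD a (hsub (.single hab))⟩⟩

end Rank

section PreyDigraph

variable {V ι β : Type*}

def preyDigraph (C : ι → Set V) (p : ι → V ⊕ β) (w v : V ⊕ β) : Prop :=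
  ∃ i, p i = v ∧ w ∈ Sum.inl '' C i

variable {C : ι → Set V} {p : ι → V ⊕ β}

theorem inNbhd_preyDigraph_apply (hp : Injective p) (i : ι) :
    inNbhd (preyDigraph C p) (p i) = Sum.inl '' C i := by
  ext w
  simp [inNbhd, preyDigraph, hp.eq_iff]

theorem inNbhd_preyDigraph_of_notMem_range {v : V ⊕ β} (hv : v ∉ Set.range p) :
    inNbhd (preyDigraph C p) v = ∅ :=
  Set.eq_empty_of_forall_notMem fun _ ⟨i, hi, _⟩ => hv ⟨i, hi⟩

theorem setOf_inNbhd_preyDigraph_eq_empty (hp : Injective p) (hC : ∀ i, (C i).Nonempty) :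
    {v | inNbhd (preyDigraph C p) v = ∅} = (Set.range p)ᶜ := by
  ext v
  refine ⟨?_, inNbhd_preyDigraph_of_notMem_range⟩
  rintro hv ⟨i, rfl⟩
  rw [Set.mem_ofPred_eq, inNbhd_preyDigraph_apply hp] at hv
  exact ((hC i).image _).ne_empty hv

theorem ncard_setOf_inNbhd_preyDigraph_eq_empty [Finite V] [Finite β] (hp : Injective p)
    (hC : ∀ i, (C i).Nonempty) :
    {v | inNbhd (preyDigraph C p) v = ∅}.ncard = Nat.card (V ⊕ β) - Nat.card ι := by
  rw [setOf_inNbhd_preyDigraph_eq_empty hp hC, Set.ncard_compl, Set.ncard_range_of_injective hp]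

theorem isAcyclicDigraph_preyDigraph (h : V ⊕ β → ℕ)
    (hh : ∀ i, ∀ c ∈ C i, h (Sum.inl c) < h (p i)) : IsAcyclicDigraph (preyDigraph C p) :=
  isAcyclicDigraph_of_rank h fun _ _ ⟨i, hi, c, hc, hw⟩ => hw ▸ hi ▸ hh i c hc

theorem competitionGraph_preyDigraph {G : SimpleGraph V} {k : ℕ} {p : ι → V ⊕ Fin k}
    (hp : Injective p) (hC : ∀ i, G.IsClique (C i))
    (hcov : ∀ u v, G.Adj u v → ∃ i, u ∈ C i ∧ v ∈ C i) :
    competitionGraph (preyDigraph C p) = addIsolated G k := by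
  ext x y
  constructor
  · rintro ⟨hxy, _, ⟨i, rfl, a, ha, rfl⟩, ⟨j, hji, b, hb, rfl⟩⟩
    obtain rfl := hp hji
    exact ⟨a, b, rfl, rfl, hC j ha hb fun hab => hxy (hab ▸ rfl)⟩
  · rintro ⟨a, b, rfl, rfl, hab⟩
    obtain ⟨i, ha, hb⟩ := hcov a b hab
    exact ⟨by simpa using hab.ne, p i, ⟨i, rfl, a, ha, rfl⟩, ⟨i, rfl, b, hb, rfl⟩⟩

theorem exists_digraph_competitionNumber [Finite ι] {G : SimpleGraph V}
    (C : ι → Set V) (hC : ∀ i, G.IsClique (C i))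
    (hcov : ∀ u v, G.Adj u v → ∃ i, u ∈ C i ∧ v ∈ C i) :
    ∃ D : V ⊕ Fin (competitionNumber G) → V ⊕ Fin (competitionNumber G) → Prop,
      IsAcyclicDigraph D ∧ competitionGraph D = addIsolated G (competitionNumber G) := by
  obtain ⟨m, ⟨e⟩⟩ := Finite.exists_equiv_fin ι
  have hp : Injective (Sum.inr ∘ e : ι → V ⊕ Fin m) := Sum.inr_injective.comp e.injective
  have hm : ∃ D : V ⊕ Fin m → V ⊕ Fin m → Prop,
      IsAcyclicDigraph D ∧ competitionGraph D = addIsolated G m :=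
    ⟨preyDigraph C (Sum.inr ∘ e),
      isAcyclicDigraph_preyDigraph (Sum.elim 0 1) fun _ _ _ => Nat.zero_lt_one,
      competitionGraph_preyDigraph hp hC hcov⟩
  exact Nat.sInf_mem (s := {k | ∃ D : V ⊕ Fin k → V ⊕ Fin k → Prop,
    IsAcyclicDigraph D ∧ competitionGraph D = addIsolated G k}) ⟨m, hm⟩

end PreyDigraph

section Cliques

variable {V : Type*} [Finite V] {G : SimpleGraph V}

theorem exists_isMaxClique_superset {C : Set V} (hC : G.IsClique C) :
    ∃ S, IsMaxClique G S ∧ C ⊆ S := by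
  obtain ⟨S, ⟨hS, hCS⟩, hmax⟩ := Set.exists_max_image {T | G.IsClique T ∧ C ⊆ T} Set.ncard
    (Set.toFinite _) ⟨C, hC, subset_rfl⟩
  exact ⟨S, ⟨hS, fun T hT hST => Set.eq_of_subset_of_ncard_le hST (hmax T ⟨hT, hCS.trans hST⟩)⟩,
    hCS⟩

theorem exists_isMaxClique_two_le_ncard {u v : V} (huv : G.Adj u v) :
    ∃ S, (IsMaxClique G S ∧ 2 ≤ S.ncard) ∧ u ∈ S ∧ v ∈ S := by
  obtain ⟨S, hS, huvS⟩ := exists_isMaxClique_superset (isClique_pair.2 fun _ => huv)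
  have huS : u ∈ S := huvS (Set.mem_insert u {v})
  have hvS : v ∈ S := huvS (Set.mem_insert_of_mem u rfl)
  refine ⟨S, ⟨hS, ?_⟩, huS, hvS⟩
  exact (Set.ncard_pair huv.ne).symm.le.trans (Set.ncard_le_ncard huvS)

theorem subset_of_isClique_of_adj_mem
    (hG : ∀ u v, G.Adj u v → ∃! S, IsMaxClique G S ∧ u ∈ S ∧ v ∈ S)
    {N S : Set V} {a b : V} (hN : G.IsClique N)
    (hS : IsMaxClique G S) (hab : G.Adj a b) (haN : a ∈ N) (hbN : b ∈ N) (haS : a ∈ S)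
    (hbS : b ∈ S) : N ⊆ S := by
  obtain ⟨M, hM, hNM⟩ := exists_isMaxClique_superset hN
  obtain rfl : M = S := (hG a b hab).unique ⟨hM, hNM haN, hNM hbN⟩ ⟨hS, haS, hbS⟩
  exact hNM

end Cliques

section Prey

variable {V : Type*} {G : SimpleGraph V} {k : ℕ} {D : V ⊕ Fin k → V ⊕ Fin k → Prop}

theorem addIsolated_adj_inl {u v : V} :
    (addIsolated G k).Adj (Sum.inl u) (Sum.inl v) ↔ G.Adj u v := by
  simp [addIsolated]

theorem adj_iff_of_competitionGraph_eq (hD : competitionGraph D = addIsolated G k) {u v : V} :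
    G.Adj u v ↔ u ≠ v ∧ ∃ x, D (Sum.inl u) x ∧ D (Sum.inl v) x := by
  rw [← addIsolated_adj_inl, ← hD]
  simp [competitionGraph]

theorem isClique_setOf_predator (hD : competitionGraph D = addIsolated G k) (x : V ⊕ Fin k) :
    G.IsClique {c | D (Sum.inl c) x} := fun _ ha _ hb hab =>
  (adj_iff_of_competitionGraph_eq hD).2 ⟨hab, x, ha, hb⟩

def IsCommonPreyIn (D : V ⊕ Fin k → V ⊕ Fin k → Prop) (S : Set V) (x : V ⊕ Fin k) : Prop :=
  ∃ a ∈ S, ∃ b ∈ S, a ≠ b ∧ D (Sum.inl a) x ∧ D (Sum.inl b) x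

theorem exists_isCommonPreyIn_forall_rank_lt [Finite V]
    (hD : competitionGraph D = addIsolated G k) (h : V ⊕ Fin k → ℕ)
    (hh : ∀ a b, D a b → h a < h b) {S : Set V} (hS : G.IsClique S) (hS₂ : 2 ≤ S.ncard) :
    ∃ x, IsCommonPreyIn D S x ∧ ∀ c ∈ S, h (Sum.inl c) < h x := by
  have hprey : ∀ a ∈ S, ∀ b ∈ S, a ≠ b → ∃ x, IsCommonPreyIn D S x ∧ D (Sum.inl a) x := by
    intro a ha b hb hab
    obtain ⟨-, x, hax, hbx⟩ := (adj_iff_of_competitionGraph_eq hD).1 (hS ha hb hab)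
    exact ⟨x, ⟨a, ha, b, hb, hab, hax, hbx⟩, hax⟩
  obtain ⟨a, b, ha, hb, hab⟩ := (Set.one_lt_ncard_iff S.toFinite).1 hS₂
  obtain ⟨x₀, hx₀, -⟩ := hprey a ha b hb hab
  obtain ⟨x, hx, hxmax⟩ := Set.exists_max_image {x | IsCommonPreyIn D S x} h (Set.toFinite _)
    ⟨x₀, hx₀⟩
  refine ⟨x, hx, fun c hc => ?_⟩
  obtain ⟨d, hd, hdc⟩ := Set.exists_ne_of_one_lt_ncard hS₂ c
  obtain ⟨y, hy, hcy⟩ := hprey c hc d hd hdc.symm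
  exact (hh _ _ hcy).trans_le (hxmax y hy)

theorem eq_of_isCommonPreyIn [Finite V]
    (hG : ∀ u v, G.Adj u v → ∃! S, IsMaxClique G S ∧ u ∈ S ∧ v ∈ S)
    (hD : competitionGraph D = addIsolated G k) {S T : Set V} {x : V ⊕ Fin k}
    (hS : IsMaxClique G S) (hT : IsMaxClique G T) (hSx : IsCommonPreyIn D S x)
    (hTx : IsCommonPreyIn D T x) : S = T := by
  obtain ⟨a, ha, b, hb, hab, hax, hbx⟩ := hSx
  obtain ⟨a', ha', b', hb', hab', hax', hbx'⟩ := hTx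
  have hNS : {c | D (Sum.inl c) x} ⊆ S := subset_of_isClique_of_adj_mem hG
    (isClique_setOf_predator hD x) hS (hS.1 ha hb hab) hax hbx ha hb
  exact (hG a' b' (hT.1 ha' hb' hab')).unique ⟨hS, hNS hax', hNS hbx'⟩ ⟨hT, ha', hb'⟩

theorem exists_injective_prey [Finite V]
    (hG : ∀ u v, G.Adj u v → ∃! S, IsMaxClique G S ∧ u ∈ S ∧ v ∈ S)
    (hD : competitionGraph D = addIsolated G k) (h : V ⊕ Fin k → ℕ)
    (hh : ∀ a b, D a b → h a < h b) :
    ∃ p : {S : Set V | IsMaxClique G S ∧ 2 ≤ S.ncard} → V ⊕ Fin k,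
      Injective p ∧ ∀ S, ∀ c ∈ S.1, h (Sum.inl c) < h (p S) := by
  choose p hpS hph using fun S : {S : Set V | IsMaxClique G S ∧ 2 ≤ S.ncard} =>
    exists_isCommonPreyIn_forall_rank_lt hD h hh S.2.1.1 S.2.2
  refine ⟨p, fun S T hST => Subtype.ext ?_, hph⟩
  exact eq_of_isCommonPreyIn hG hD S.2.1 T.2.1 (hpS S) (hST ▸ hpS T)

end Prey

theorem exists_nice_acyclic_digraph {V : Type*} [Fintype V] (G : SimpleGraph V)
    (hG : ∀ u v, G.Adj u v → ∃! S, IsMaxClique G S ∧ u ∈ S ∧ v ∈ S)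
    (k : ℕ) (hk : competitionNumber G ≤ k) :
    ∃ D : (V ⊕ Fin k) → (V ⊕ Fin k) → Prop,
      IsAcyclicDigraph D ∧
      competitionGraph D = addIsolated G k ∧
      (∀ v, inNbhd D v = ∅ ∨
        ∃ S : Set V, (IsMaxClique G S ∧ 2 ≤ S.ncard) ∧ inNbhd D v = Sum.inl '' S) ∧
      {v | inNbhd D v = ∅}.ncard =
        k + Fintype.card V - {S : Set V | IsMaxClique G S ∧ 2 ≤ S.ncard}.ncard := by
  set F := {S : Set V | IsMaxClique G S ∧ 2 ≤ S.ncard}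
  have hcliq (S : F) : G.IsClique S.1 := S.2.1.1
  have hcov (u v : V) (huv : G.Adj u v) : ∃ S : F, u ∈ S.1 ∧ v ∈ S.1 :=
    let ⟨S, hS, huv⟩ := exists_isMaxClique_two_le_ncard huv
    ⟨⟨S, hS⟩, huv⟩
  obtain ⟨D₀, hD₀, hcomp₀⟩ := exists_digraph_competitionNumber Subtype.val hcliq hcov
  obtain ⟨h, hh⟩ := hD₀.exists_rank
  obtain ⟨p₀, hp₀, hp₀h⟩ := exists_injective_prey hG hcomp₀ h hh
  set ι : V ⊕ Fin (competitionNumber G) → V ⊕ Fin k := Sum.map id (Fin.castLE hk)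
  have hι : Injective ι := Sum.map_injective.2 ⟨injective_id, Fin.castLE_injective hk⟩
  have hp : Injective (ι ∘ p₀) := hι.comp hp₀
  refine ⟨preyDigraph Subtype.val (ι ∘ p₀), ?_, competitionGraph_preyDigraph hp hcliq hcov,
    fun v => ?_, ?_⟩
  · refine isAcyclicDigraph_preyDigraph (extend ι h 0) fun S c hc => ?_
    rw [comp_apply, hι.extend_apply]
    exact (hι.extend_apply h 0 (Sum.inl c)).trans_lt (hp₀h S c hc)
  · by_cases hv : v ∈ Set.range (ι ∘ p₀)
    · obtain ⟨S, rfl⟩ := hv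
      exact .inr ⟨S, S.2, inNbhd_preyDigraph_apply hp S⟩
    · exact .inl (inNbhd_preyDigraph_of_notMem_range hv)
  · rw [ncard_setOf_inNbhd_preyDigraph_eq_empty hp fun S => Set.nonempty_of_ncard_ne_zero
      (Nat.zero_lt_two.trans_le S.2.2).ne', Nat.card_sum, Nat.card_eq_fintype_card, Nat.card_fin,
      Nat.card_coe_set_eq, add_comm]
end

section
/- For every q ≥ 2, the competition number of the Hamming graph H(2,q) equals 2. -/
open SimpleGraph

/-!
For the upper bound, send every vertex of each line of the `q × q` grid to a sink of that line,
distinct lines getting distinct sinks: the competition graph is then the union of the lines, which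
is `H(2,q)`. Taking as sink the lexicographic predecessor of the line's least vertex keeps the
digraph acyclic, and only the two lines through the origin need new vertices.

For the lower bound, take in an acyclic realization a vertex `v₁` without out-neighbours and then a
vertex `v₂` all of whose out-neighbours equal `v₁`. As `G` has no isolated vertex, `v₁` is new; if
there is at most one new vertex, `v₂` lies in `G`, and its neighbourhood, being contained in the
in-neighbourhood of `v₁`, is a clique. In `H(2,q)` with `q ≥ 2` the neighbours `(a, x₁)` and
`(x₀, b)` of `x` are not adjacent.
-/

open Function

theorem IsAcyclicDigraph.of_rank {α : Type*} {D : α → α → Prop} (r : α → ℕ)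
    (hr : ∀ u v, D u v → r v < r u) : IsAcyclicDigraph D := fun v hv => by
  have hlt := Relation.TransGen.lift (p := (· > ·)) r hr v v hv
  rw [Relation.transGen_eq_self] at hlt
  exact lt_irrefl _ hlt

theorem IsAcyclicDigraph.wellFounded_swap {α : Type*} [Finite α] {D : α → α → Prop}
    (hD : IsAcyclicDigraph D) : WellFounded (swap D) :=
  haveI : Std.Irrefl (Relation.TransGen (swap D)) :=
    ⟨fun a h => hD a (Relation.transGen_swap.mp h)⟩
  Subrelation.wf Relation.TransGen.single (Finite.wellFounded_of_trans_of_irrefl _)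

@[simp]
theorem addIsolated_adj_inl_s11 {V : Type*} {G : SimpleGraph V} {k : ℕ} {x y : V} :
    (addIsolated G k).Adj (.inl x) (.inl y) ↔ G.Adj x y := by
  simp [addIsolated]

section CliqueSink

variable {V ι : Type*} {k : ℕ}

def cliqueSinkDigraph (C : ι → Set V) (σ : ι → V ⊕ Fin k) : V ⊕ Fin k → V ⊕ Fin k → Prop
  | .inl x, w => ∃ i, x ∈ C i ∧ σ i = w
  | .inr _, _ => False

theorem competitionGraph_cliqueSinkDigraph {G : SimpleGraph V} {C : ι → Set V}
    {σ : ι → V ⊕ Fin k} (hC : ∀ i, G.IsClique (C i))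
    (hcover : ∀ x y, G.Adj x y → ∃ i, x ∈ C i ∧ y ∈ C i) (hσ : Injective σ) :
    competitionGraph (cliqueSinkDigraph C σ) = addIsolated G k := by
  ext u v
  rcases u with x | i
  · rcases v with y | j
    · simp only [competitionGraph, cliqueSinkDigraph, addIsolated_adj_inl_s11, ne_eq, Sum.inl.injEq]
      constructor
      · rintro ⟨hxy, _, ⟨i, hx, rfl⟩, j, hy, hji⟩
        exact hC i hx (hσ hji ▸ hy) hxy
      · intro hxy
        obtain ⟨i, hx, hy⟩ := hcover x y hxy
        exact ⟨hxy.ne, σ i, ⟨i, hx, rfl⟩, i, hy, rfl⟩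
    · simp [competitionGraph, cliqueSinkDigraph, addIsolated]
  · simp [competitionGraph, cliqueSinkDigraph, addIsolated]

theorem isAcyclicDigraph_cliqueSinkDigraph {C : ι → Set V} {σ : ι → V ⊕ Fin k}
    (r : V ⊕ Fin k → ℕ) (hr : ∀ i, ∀ x ∈ C i, r (σ i) < r (.inl x)) :
    IsAcyclicDigraph (cliqueSinkDigraph C σ) := by
  refine IsAcyclicDigraph.of_rank r ?_
  rintro (x | _) w ⟨i, hx, rfl⟩
  exact hr i x hx

end CliqueSink

theorem two_le_of_competitionGraph_eq_addIsolated {V : Type*} [Finite V] [Nonempty V]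
    {G : SimpleGraph V} (hG : ∀ x, ¬ G.IsClique (G.neighborSet x)) {k : ℕ}
    {D : V ⊕ Fin k → V ⊕ Fin k → Prop} (hD : IsAcyclicDigraph D)
    (hDG : competitionGraph D = addIsolated G k) : 2 ≤ k := by
  have hcompete : ∀ {x y}, G.Adj x y → ∃ w, D (.inl x) w ∧ D (.inl y) w := fun hxy => by
    rw [← addIsolated_adj_inl_s11 (k := k), ← hDG] at hxy
    exact hxy.2
  have hout : ∀ x, ∃ w, D (.inl x) w := fun x => by
    obtain ⟨y, hy⟩ : (G.neighborSet x).Nonempty :=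
      Set.nonempty_iff_ne_empty.2 fun h => hG x (h ▸ G.isClique_empty)
    exact (hcompete hy).imp fun _ => And.left
  have hwf := hD.wellFounded_swap
  obtain ⟨x₀⟩ := ‹Nonempty V›
  obtain ⟨v₁, -, hv₁⟩ := hwf.has_min Set.univ ⟨.inl x₀, trivial⟩
  obtain ⟨i, rfl⟩ : ∃ i, v₁ = .inr i := by
    rcases v₁ with x | i
    · obtain ⟨w, hw⟩ := hout x
      exact absurd hw (hv₁ w trivial)
    · exact ⟨i, rfl⟩
  obtain ⟨v₂, hv₂i : v₂ ≠ .inr i, hv₂⟩ := hwf.has_min {.inr i}ᶜ ⟨.inl x₀, Sum.inl_ne_inr⟩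
  have hv₂out : ∀ w, D v₂ w → w = .inr i := fun w hw => by_contra fun hwi => hv₂ w hwi hw
  by_contra! hk
  have : Subsingleton (Fin k) := Fin.subsingleton_iff_le_one.2 (by omega)
  obtain ⟨x, rfl⟩ : ∃ x, v₂ = .inl x := by
    rcases v₂ with x | j
    · exact ⟨x, rfl⟩
    · exact absurd (congrArg Sum.inr (Subsingleton.elim j i)) hv₂i
  have hnbr : ∀ y ∈ G.neighborSet x, D (.inl y) (.inr i) := fun y hy => by
    obtain ⟨w, hxw, hyw⟩ := hcompete hy
    rwa [hv₂out w hxw] at hyw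
  refine hG x fun y hy z hz hyz => ?_
  rw [← addIsolated_adj_inl_s11 (k := k), ← hDG]
  exact ⟨Sum.inl_injective.ne hyz, .inr i, hnbr y hy, hnbr z hz⟩

section HammingSquare

variable {q : ℕ}

theorem hammingGraph_two_adj_iff {x y : Fin 2 → Fin q} :
    (hammingGraph 2 q).Adj x y ↔ x ≠ y ∧ ∃ j, x j = y j := by
  change hammingDist x y = 1 ↔ _
  rw [hammingDist, Finset.card_filter, Fin.sum_univ_two]
  simp only [ne_eq, funext_iff, Fin.forall_fin_two, Fin.exists_fin_two]
  split_ifs <;> simp_all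

theorem hammingGraph_two_not_isClique_neighborSet (hq : 2 ≤ q) (x : Fin 2 → Fin q) :
    ¬ (hammingGraph 2 q).IsClique ((hammingGraph 2 q).neighborSet x) := by
  have : Nontrivial (Fin q) := Fin.nontrivial_iff_two_le.2 hq
  obtain ⟨a, ha⟩ := exists_ne (x 0)
  obtain ⟨b, hb⟩ := exists_ne (x 1)
  have hy : (hammingGraph 2 q).Adj x ![a, x 1] := by
    simp [hammingGraph_two_adj_iff, funext_iff, Fin.forall_fin_two, ha.symm]
  have hz : (hammingGraph 2 q).Adj x ![x 0, b] := by
    simp [hammingGraph_two_adj_iff, funext_iff, Fin.forall_fin_two, hb.symm]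
  have hyz : ¬ (hammingGraph 2 q).Adj ![a, x 1] ![x 0, b] := by
    simp [hammingGraph_two_adj_iff, Fin.exists_fin_two, ha, hb.symm]
  exact fun hclique => hyz (hclique hy hz fun h => ha (congrFun h 0))

def hammingLine (q : ℕ) : Fin 2 × Fin q → Set (Fin 2 → Fin q)
  | (j, a) => {x | x j = a}

def hammingLineSink (q : ℕ) : Fin 2 × Fin q → (Fin 2 → Fin q) ⊕ Fin 2
  | (j, a) =>
    if h : (a : ℕ) = 0 then .inr j
    else if j = 0 then .inl ![⟨a - 1, by omega⟩, ⟨q - 1, by omega⟩]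
    else .inl ![⟨0, by omega⟩, ⟨a - 1, by omega⟩]

theorem hammingLineSink_injective : Injective (hammingLineSink q) := by
  rintro ⟨j, a⟩ ⟨j', a'⟩ h
  simp only [hammingLineSink] at h
  split_ifs at h <;> simp [funext_iff, Fin.forall_fin_two, Fin.ext_iff] at h ⊢ <;> omega

theorem competitionGraph_cliqueSinkDigraph_hammingLine :
    competitionGraph (cliqueSinkDigraph (hammingLine q) (hammingLineSink q)) =
      addIsolated (hammingGraph 2 q) 2 := by
  refine competitionGraph_cliqueSinkDigraph ?_ ?_ hammingLineSink_injective
  · rintro ⟨j, a⟩ x (hx : x j = a) y (hy : y j = a) hxy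
    exact hammingGraph_two_adj_iff.2 ⟨hxy, j, hx.trans hy.symm⟩
  · intro x y hxy
    obtain ⟨-, j, hj⟩ := hammingGraph_two_adj_iff.1 hxy
    exact ⟨(j, x j), rfl, hj.symm⟩

theorem isAcyclicDigraph_cliqueSinkDigraph_hammingLine :
    IsAcyclicDigraph (cliqueSinkDigraph (hammingLine q) (hammingLineSink q)) := by
  refine isAcyclicDigraph_cliqueSinkDigraph (Sum.elim (fun x => (x 0 + 1) * q + x 1) fun _ => 0) ?_
  rintro ⟨j, a⟩ x (rfl : x j = a)
  simp only [hammingLineSink]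
  have hq : 0 < q := (x j).pos
  split_ifs with h0 hj
  · simp [hq]
  · subst hj
    simp only [Sum.elim_inl, Matrix.cons_val_zero, Matrix.cons_val_one]
    rw [Nat.sub_add_cancel (Nat.one_le_iff_ne_zero.2 h0), add_one_mul]
    omega
  · obtain rfl : j = 1 := by omega
    simp only [Sum.elim_inl, Matrix.cons_val_zero, Matrix.cons_val_one, add_one_mul]
    omega

end HammingSquare

theorem competitionNumber_H2q (q : ℕ) (hq : 2 ≤ q) :
    competitionNumber (hammingGraph 2 q) = 2 := by
  have hacyclic := isAcyclicDigraph_cliqueSinkDigraph_hammingLine (q := q)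
  have hcompetition := competitionGraph_cliqueSinkDigraph_hammingLine (q := q)
  have : Nonempty (Fin q) := ⟨⟨0, by omega⟩⟩
  refine le_antisymm (Nat.sInf_le ⟨_, hacyclic, hcompetition⟩)
    (le_csInf ⟨2, _, hacyclic, hcompetition⟩ ?_)
  rintro k ⟨D, hD, hDG⟩
  exact two_le_of_competitionGraph_eq_addIsolated
    (hammingGraph_two_not_isClique_neighborSet hq) hD hDG
end

section
/- For every n ≥ 3, the competition number of the ternary Hamming graph H(n,3) is at most (n−3)·3^{n−1} + 6. -/
open SimpleGraph

/-
Every edge of `H(n,3)` lies on a line, a maximal clique `{Function.update p j c | c : Fin 3}`.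
If every line gets its own sink, a vertex coming later than all points of the line in a fixed
order of the vertices, or else one of `k` new isolated vertices, and the points of each line
prey on its sink, then the digraph is acyclic and its competition graph is `H(n,3)` plus `k`
isolated vertices. When `e` vertices are the sink of no line, the number of lines left for the
isolated vertices is `n * 3 ^ (n - 1) - (3 ^ n - e) = (n - 3) * 3 ^ (n - 1) + e`.

An explicit assignment of `H(3,3)` with `e = 6` is carried up by induction. `H(n+1,3)` consists
of three layers `Fin.cons c H(n,3)` and the vertical lines. Layers `0` and `1` copy the
assignment, the `e` vertices of layer `1` without a line become sinks of distinct free lines of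
layer `0` (there are `(n - 3) * 3 ^ (n - 1) + e ≥ e` of them), and every vertex of layer `2` becomes the sink of the vertical line through its predecessor (the
first one takes a free line of layer `1`). So `e` does not change.
-/

open Finset

theorem isAcyclicDigraph_of_lt {V α : Type*} [Preorder α] {D : V → V → Prop} (ρ : V → α)
    (hρ : ∀ a b, D a b → ρ a < ρ b) : IsAcyclicDigraph D := by
  intro a ha
  have hlt := ha.lift ρ hρ
  rw [Relation.transGen_eq_self] at hlt
  exact lt_irrefl _ hlt

theorem competitionNumber_le_of_injective_sink {V ι α : Type*} [Preorder α]
    (G : SimpleGraph V) (C : ι → Set V) (hC : ∀ i, G.IsClique (C i))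
    (hcover : ∀ u v, G.Adj u v → ∃ i, u ∈ C i ∧ v ∈ C i) {k : ℕ}
    (s : ι → V ⊕ Fin k) (hs : Function.Injective s) (r : V → α)
    (hr : ∀ i v, s i = Sum.inl v → ∀ u ∈ C i, r u < r v) :
    competitionNumber G ≤ k := by
  let D : V ⊕ Fin k → V ⊕ Fin k → Prop := fun a b => ∃ u i, a = Sum.inl u ∧ u ∈ C i ∧ b = s i
  have hacyclic : IsAcyclicDigraph D := by
    refine isAcyclicDigraph_of_lt (Sum.elim (fun v => (r v : WithTop α)) fun _ => ⊤) ?_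
    rintro _ b ⟨u, i, rfl, hu, rfl⟩
    rcases hsi : s i with v | j
    · exact WithTop.coe_lt_coe.mpr (hr i v hsi u hu)
    · exact WithTop.coe_lt_top (r u)
  refine Nat.sInf_le ⟨D, hacyclic, ?_⟩
  ext a b
  constructor
  · rintro ⟨hab, _, ⟨u, i, rfl, hu, rfl⟩, ⟨v, j, rfl, hv, hij⟩⟩
    cases hs hij
    exact ⟨u, v, rfl, rfl, hC i hu hv fun h => hab (congrArg Sum.inl h)⟩
  · rintro ⟨u, v, rfl, rfl, huv⟩
    obtain ⟨i, hu, hv⟩ := hcover u v huv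
    exact ⟨fun h => huv.ne (Sum.inl_injective h), s i, ⟨u, i, rfl, hu, rfl⟩, ⟨v, i, rfl, hv, rfl⟩⟩

theorem competitionNumber_le_card_unassigned {V ι α : Type*} [Fintype V] [Fintype ι]
    [DecidableEq ι] [Preorder α]
    (G : SimpleGraph V) (C : ι → Set V) (hC : ∀ i, G.IsClique (C i))
    (hcover : ∀ u v, G.Adj u v → ∃ i, u ∈ C i ∧ v ∈ C i)
    (A : V → Option ι)
    (r : V → α) (hr : ∀ v i, A v = some i → ∀ u ∈ C i, r u < r v) :
    competitionNumber G ≤ #{i | ∀ v, A v ≠ some i} := by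
  let e : {i // ∀ v, A v ≠ some i} ≃ Fin #{i | ∀ v, A v ≠ some i} :=
    (Equiv.subtypeEquivRight (by simp)).trans (Finset.equivFin _)
  let s : ι → V ⊕ Fin _ := fun i =>
    if h : ∃ v, A v = some i then Sum.inl h.choose else Sum.inr (e ⟨i, not_exists.mp h⟩)
  have hs_inl : ∀ i v, s i = Sum.inl v → A v = some i := by
    intro i v hi
    by_cases h : ∃ v, A v = some i
    · simp only [s, dif_pos h, Sum.inl.injEq] at hi
      exact hi ▸ h.choose_spec
    · simp [s, dif_neg h] at hi
  have hs_inr : ∀ i m, s i = Sum.inr m → (e.symm m : ι) = i := by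
    intro i m hi
    by_cases h : ∃ v, A v = some i
    · simp [s, dif_pos h] at hi
    · simp only [s, dif_neg h, Sum.inr.injEq] at hi
      simp [← hi]
  refine competitionNumber_le_of_injective_sink G C hC hcover s ?_ r
    fun i v hi => hr v i (hs_inl i v hi)
  intro i j hij
  rcases hsi : s i with v | m
  · exact Option.some_injective _ <| (hs_inl i v hsi).symm.trans (hs_inl j v (hij ▸ hsi))
  · exact (hs_inr i m hsi).symm.trans (hs_inr j m (hij ▸ hsi))

theorem card_unassigned_add_card {α β : Type*} [Fintype α] [Fintype β] [DecidableEq β]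
    (A : α → Option β) (hA : ∀ u v b, A u = some b → A v = some b → u = v) :
    #{b | ∀ a, A a ≠ some b} + Fintype.card α = Fintype.card β + #{a | A a = none} := by
  have hused : #{a | A a ≠ none} = #{b | ∃ a, A a = some b} := by
    refine card_bij (fun a ha => (A a).get (Option.isSome_iff_ne_none.mpr (mem_filter.mp ha).2))
      (fun a _ => by simp)
      (fun a _ a' _ h => hA a a' _ (Option.some_get _).symm (by rw [h, Option.some_get]))
      (fun b hb => ?_)
    obtain ⟨a, ha⟩ := (mem_filter.mp hb).2
    exact ⟨a, by simp [ha], by simp [ha]⟩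
  have h1 := card_filter_add_card_filter_not (s := univ) (fun b => ∃ a, A a = some b)
  have h2 := card_filter_add_card_filter_not (s := univ) (fun a => A a = none)
  simp only [ne_eq, not_exists] at h1 hused ⊢
  rw [card_univ] at h1 h2
  omega

theorem Nat.add_mul_lt_add_mul_iff {N a b c c' : ℕ} (ha : a < N) (hb : b < N) :
    a + N * c < b + N * c' ↔ c < c' ∨ c = c' ∧ a < b := by
  rcases lt_trichotomy c c' with h | rfl | h
  · simp only [h, true_or, iff_true]
    nlinarith
  · simp
  · simp only [h.ne', h.not_gt, false_or, false_and, iff_false, not_lt]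
    nlinarith

theorem hammingDist_eq_one_iff {ι : Type*} {β : ι → Type*} [Fintype ι] [∀ i, DecidableEq (β i)]
    {x y : ∀ i, β i} : hammingDist x y = 1 ↔ ∃ j, x j ≠ y j ∧ ∀ i ≠ j, x i = y i := by
  simp only [hammingDist, Finset.card_eq_one, Finset.eq_singleton_iff_unique_mem,
    Finset.mem_filter, Finset.mem_univ, true_and]
  exact exists_congr fun j => and_congr_right fun _ => forall_congr' fun i => not_imp_comm

/-- `⟨(j, p), _⟩` stands for the line `{Function.update p j c | c : Fin 3}` of `H(n,3)`, the
clique `Sset j p`; normalising `p j = 0` makes the representation unique. -/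
abbrev HammingLine (n : ℕ) : Type := {jp : Fin n × (Fin n → Fin 3) // jp.2 jp.1 = 0}

namespace HammingLine

variable {n : ℕ}

def point (ℓ : HammingLine n) (c : Fin 3) : Fin n → Fin 3 :=
  Function.update ℓ.1.2 ℓ.1.1 c

theorem adj_point (ℓ : HammingLine n) {c c' : Fin 3} (h : c ≠ c') :
    (hammingGraph n 3).Adj (ℓ.point c) (ℓ.point c') :=
  hammingDist_eq_one_iff.mpr ⟨ℓ.1.1, by simpa [point] using h, fun i hi => by simp [point, hi]⟩

theorem isClique_range_point (ℓ : HammingLine n) :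
    (hammingGraph n 3).IsClique (Set.range ℓ.point) := by
  rintro _ ⟨c, rfl⟩ _ ⟨c', rfl⟩ h
  exact ℓ.adj_point fun hc => h (congrArg ℓ.point hc)

theorem exists_of_adj {u v : Fin n → Fin 3} (h : (hammingGraph n 3).Adj u v) :
    ∃ ℓ : HammingLine n, u ∈ Set.range ℓ.point ∧ v ∈ Set.range ℓ.point := by
  obtain ⟨j, -, hj⟩ := hammingDist_eq_one_iff.mp h
  refine ⟨⟨(j, Function.update u j 0), by simp⟩, ⟨u j, by simp [point]⟩, ⟨v j, ?_⟩⟩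
  simp only [point, Function.update_idem, Function.update_eq_iff]
  exact ⟨trivial, hj⟩

theorem card : Fintype.card (HammingLine n) = n * 3 ^ (n - 1) := by
  rw [Fintype.card_congr (Equiv.subtypeProdEquivSigmaSubtype fun j (p : Fin n → Fin 3) => p j = 0),
    Fintype.card_sigma]
  have hfiber (j : Fin n) : Fintype.card {p : Fin n → Fin 3 // p j = 0} = 3 ^ (n - 1) := by
    rw [Fintype.card_subtype, ← Fintype.piFinset_univ,
      Fintype.card_filter_piFinset_const_eq_of_mem _ _ (mem_univ _)]
    simp
  simp [hfiber]

def lift (c : Fin 3) (ℓ : HammingLine n) : HammingLine (n + 1) :=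
  ⟨(ℓ.1.1.succ, Fin.cons c ℓ.1.2), by simpa using ℓ.2⟩

def vertical (x : Fin n → Fin 3) : HammingLine (n + 1) :=
  ⟨(0, Fin.cons 0 x), rfl⟩

@[simp]
theorem lift_inj {c c' : Fin 3} {ℓ ℓ' : HammingLine n} :
    lift c ℓ = lift c' ℓ' ↔ c = c' ∧ ℓ = ℓ' := by
  simp [lift, Subtype.ext_iff, Prod.ext_iff, Fin.cons_inj, and_left_comm]

@[simp]
theorem vertical_inj {x y : Fin n → Fin 3} : vertical x = vertical y ↔ x = y := by
  simp [vertical, Subtype.ext_iff, Fin.cons_inj]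

@[simp]
theorem lift_ne_vertical (c : Fin 3) (ℓ : HammingLine n) (x : Fin n → Fin 3) :
    lift c ℓ ≠ vertical x := by
  simp [lift, vertical, Subtype.ext_iff, Fin.succ_ne_zero]

@[simp]
theorem vertical_ne_lift (c : Fin 3) (ℓ : HammingLine n) (x : Fin n → Fin 3) :
    vertical x ≠ lift c ℓ :=
  (lift_ne_vertical c ℓ x).symm

theorem point_lift (c : Fin 3) (ℓ : HammingLine n) (d : Fin 3) :
    (lift c ℓ).point d = Fin.cons c (ℓ.point d) := by
  simp [point, lift, Fin.cons_update]

theorem point_vertical (x : Fin n → Fin 3) (d : Fin 3) :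
    (vertical x).point d = Fin.cons d x := by
  simp [point, vertical, Fin.update_cons_zero]

end HammingLine

/-- `line v = some ℓ` means that `v` is the common prey of the points of `ℓ`. -/
structure PreyAssignment (n : ℕ) where
  rank : (Fin n → Fin 3) ≃ Fin (3 ^ n)
  line : (Fin n → Fin 3) → Option (HammingLine n)
  line_injective : ∀ u v ℓ, line u = some ℓ → line v = some ℓ → u = v
  rank_point_lt : ∀ v ℓ, line v = some ℓ → ∀ c, rank (ℓ.point c) < rank v

namespace PreyAssignment

variable {n : ℕ} (S : PreyAssignment n)

theorem competitionNumber_le :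
    competitionNumber (hammingGraph n 3) ≤ #{ℓ | ∀ v, S.line v ≠ some ℓ} :=
  competitionNumber_le_card_unassigned _ (fun ℓ => Set.range ℓ.point)
    HammingLine.isClique_range_point (fun _ _ => HammingLine.exists_of_adj) S.line S.rank
    fun v ℓ hv _ ⟨c, hc⟩ => hc ▸ S.rank_point_lt v ℓ hv c

theorem card_unassigned (hn : 3 ≤ n) :
    #{ℓ | ∀ v, S.line v ≠ some ℓ} = (n - 3) * 3 ^ (n - 1) + #{v | S.line v = none} := by
  have h := card_unassigned_add_card S.line S.line_injective
  rw [HammingLine.card, Fintype.card_fun, Fintype.card_fin, Fintype.card_fin] at h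
  obtain ⟨m, rfl⟩ : ∃ m, n = m + 3 := ⟨n - 3, by omega⟩
  rw [pow_succ'] at h
  rw [Nat.add_sub_cancel, show m + 3 - 1 = m + 2 by omega] at *
  linarith

theorem line_eq_none_of_rank_eq_zero {v : Fin n → Fin 3} (hv : S.rank v = 0) : S.line v = none :=
  Option.eq_none_iff_forall_ne_some.mpr fun ℓ hℓ => by
    simpa [hv] using S.rank_point_lt v ℓ hℓ 0

section Step

open HammingLine

def stepRank : (Fin (n + 1) → Fin 3) ≃ Fin (3 ^ (n + 1)) :=
  (Fin.consEquiv fun _ => Fin 3).symm.trans <| ((Equiv.refl _).prodCongr S.rank).trans <|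
    finProdFinEquiv.trans (finCongr (pow_succ' 3 n).symm)

theorem stepRank_cons_lt_iff {c c' : Fin 3} {x y : Fin n → Fin 3} :
    S.stepRank (Fin.cons c x) < S.stepRank (Fin.cons c' y) ↔
      c < c' ∨ c = c' ∧ S.rank x < S.rank y := by
  simp only [stepRank, Equiv.trans_apply, Fin.lt_def]
  simpa [Fin.val_inj] using Nat.add_mul_lt_add_mul_iff (S.rank x).2 (S.rank y).2 (c := c) (c' := c')

def pred (x : Fin n → Fin 3) : Fin n → Fin 3 :=
  S.rank.symm ⟨S.rank x - 1, (Nat.sub_le _ _).trans_lt (S.rank x).2⟩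

theorem rank_pred_lt {x : Fin n → Fin 3} (hx : S.rank x ≠ 0) : S.rank (S.pred x) < S.rank x := by
  rw [pred, Equiv.apply_symm_apply, Fin.lt_def]
  exact Nat.sub_one_lt (Fin.val_ne_zero_iff.mpr hx)

theorem pred_inj {x y : Fin n → Fin 3} (hx : S.rank x ≠ 0) (hy : S.rank y ≠ 0) :
    S.pred x = S.pred y ↔ x = y := by
  refine ⟨fun h => ?_, congrArg S.pred⟩
  have := Fin.val_ne_zero_iff.mpr hx
  have := Fin.val_ne_zero_iff.mpr hy
  simp only [pred, EmbeddingLike.apply_eq_iff_eq, Fin.mk.injEq] at h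
  exact S.rank.injective (Fin.ext (by omega))

variable (g : (Fin n → Fin 3) → HammingLine n)

def stepLine (c : Fin 3) (x : Fin n → Fin 3) : Option (HammingLine (n + 1)) :=
  match c with
  | 0 => (S.line x).map (lift 0)
  | 1 => some ((S.line x).elim (lift 0 (g x)) (lift 1))
  | 2 => some (if S.rank x = 0 then lift 1 (g x) else vertical (S.pred x))

theorem stepLine_eq_some {c : Fin 3} {x : Fin n → Fin 3} {L : HammingLine (n + 1)}
    (h : S.stepLine g c x = some L) :
    (c = 0 ∧ ∃ ℓ, S.line x = some ℓ ∧ L = lift 0 ℓ) ∨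
    (c = 1 ∧ S.line x = none ∧ L = lift 0 (g x)) ∨
    (c = 1 ∧ ∃ ℓ, S.line x = some ℓ ∧ L = lift 1 ℓ) ∨
    (c = 2 ∧ S.rank x = 0 ∧ L = lift 1 (g x)) ∨
    (c = 2 ∧ S.rank x ≠ 0 ∧ L = vertical (S.pred x)) := by
  fin_cases c <;> cases hx : S.line x <;> by_cases h0 : S.rank x = 0 <;>
    simp [stepLine, hx, h0] at h ⊢
  all_goals exact h.symm

variable {g}

theorem stepLine_injective
    (hg_free : Set.MapsTo g {x | S.line x = none} {ℓ | ∀ v, S.line v ≠ some ℓ})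
    (hg_inj : Set.InjOn g {x | S.line x = none})
    {c c' : Fin 3} {x y : Fin n → Fin 3} {L : HammingLine (n + 1)}
    (h : S.stepLine g c x = some L) (h' : S.stepLine g c' y = some L) : c = c' ∧ x = y := by
  rcases S.stepLine_eq_some g h with ⟨rfl, ℓ, hx, rfl⟩ | ⟨rfl, hx, rfl⟩ | ⟨rfl, ℓ, hx, rfl⟩ |
      ⟨rfl, hx, rfl⟩ | ⟨rfl, hx, rfl⟩ <;>
    rcases S.stepLine_eq_some g h' with ⟨rfl, ℓ', hy, hL⟩ | ⟨rfl, hy, hL⟩ | ⟨rfl, ℓ', hy, hL⟩ |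
      ⟨rfl, hy, hL⟩ | ⟨rfl, hy, hL⟩ <;>
    simp only [lift_inj, vertical_inj, lift_ne_vertical, vertical_ne_lift, true_and,
      false_and, Fin.reduceEq] at hL ⊢
  · exact S.line_injective x y ℓ hx (hL ▸ hy)
  · exact hg_free hy x (hL ▸ hx)
  · exact hg_free hx y (hL ▸ hy)
  · exact hg_inj hx hy hL
  · exact S.line_injective x y ℓ hx (hL ▸ hy)
  · exact hg_free (S.line_eq_none_of_rank_eq_zero hy) x (hL ▸ hx)
  · exact hg_free (S.line_eq_none_of_rank_eq_zero hx) y (hL ▸ hy)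
  · exact S.rank.injective (hx.trans hy.symm)
  · exact (S.pred_inj hx hy).mp hL

theorem stepRank_point_lt {c : Fin 3} {x : Fin n → Fin 3} {L : HammingLine (n + 1)}
    (h : S.stepLine g c x = some L) (d : Fin 3) :
    S.stepRank (L.point d) < S.stepRank (Fin.cons c x) := by
  rcases S.stepLine_eq_some g h with ⟨rfl, ℓ, hx, rfl⟩ | ⟨rfl, hx, rfl⟩ | ⟨rfl, ℓ, hx, rfl⟩ |
      ⟨rfl, hx, rfl⟩ | ⟨rfl, hx, rfl⟩ <;>
    simp only [point_lift, point_vertical, stepRank_cons_lt_iff]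
  · simpa using S.rank_point_lt x ℓ hx d
  · exact Or.inl (by decide)
  · simpa using S.rank_point_lt x ℓ hx d
  · exact Or.inl (by decide)
  · exact (lt_or_eq_of_le (Fin.le_last d)).imp_right fun hd => ⟨hd, S.rank_pred_lt hx⟩

theorem stepLine_eq_none {c : Fin 3} {x : Fin n → Fin 3} :
    S.stepLine g c x = none ↔ c = 0 ∧ S.line x = none := by
  fin_cases c <;> simp [stepLine]

def step (hg_free : Set.MapsTo g {x | S.line x = none} {ℓ | ∀ v, S.line v ≠ some ℓ})
    (hg_inj : Set.InjOn g {x | S.line x = none}) : PreyAssignment (n + 1) where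
  rank := S.stepRank
  line v := S.stepLine g (v 0) (Fin.tail v)
  line_injective u v L hu hv := by
    obtain ⟨h0, ht⟩ := S.stepLine_injective hg_free hg_inj hu hv
    rw [← Fin.cons_self_tail u, ← Fin.cons_self_tail v, h0, ht]
  rank_point_lt v L hv d := by
    simpa only [Fin.cons_self_tail] using S.stepRank_point_lt hv d

theorem card_step_line_eq_none
    (hg_free : Set.MapsTo g {x | S.line x = none} {ℓ | ∀ v, S.line v ≠ some ℓ})
    (hg_inj : Set.InjOn g {x | S.line x = none}) :
    #{v | (S.step hg_free hg_inj).line v = none} = #{x | S.line x = none} := by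
  have : ({v | (S.step hg_free hg_inj).line v = none} : Finset _) =
      ({x | S.line x = none} : Finset _).image (Fin.cons 0) := by
    ext v
    induction v using Fin.consCases
    simp [step, stepLine_eq_none, Fin.cons_inj, eq_comm, and_comm]
  rw [this, card_image_of_injective _ (Fin.cons_right_injective _)]

end Step

theorem exists_succ_card_line_eq_none_eq (hn : 3 ≤ n) :
    ∃ T : PreyAssignment (n + 1), #{v | T.line v = none} = #{x | S.line x = none} := by
  have : Nonempty (HammingLine n) := ⟨⟨(⟨0, by omega⟩, 0), rfl⟩⟩
  have hle : {x | S.line x = none}.encard ≤ {ℓ | ∀ v, S.line v ≠ some ℓ}.encard := by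
    rw [← coe_filter_univ, ← coe_filter_univ, Set.encard_coe_eq_coe_finsetCard,
      Set.encard_coe_eq_coe_finsetCard, S.card_unassigned hn]
    exact_mod_cast le_add_self
  obtain ⟨g, hg_free, hg_inj⟩ := (Set.toFinite _).exists_injOn_of_encard_le hle
  exact ⟨S.step hg_free hg_inj, S.card_step_line_eq_none hg_free hg_inj⟩

/-- Row `i`: the vertex of rank `i` and the line whose common prey it is. -/
def baseTable : Fin 27 → (Fin 3 → Fin 3) × Option (HammingLine 3) :=
  ![(![0, 0, 0], none),
    (![0, 0, 1], none),
    (![0, 0, 2], none),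
    (![0, 1, 0], some ⟨(2, ![0, 0, 0]), rfl⟩),
    (![0, 2, 0], none),
    (![0, 1, 1], some ⟨(1, ![0, 0, 0]), rfl⟩),
    (![0, 1, 2], none),
    (![0, 2, 1], some ⟨(2, ![0, 1, 0]), rfl⟩),
    (![0, 2, 2], some ⟨(1, ![0, 0, 1]), rfl⟩),
    (![1, 0, 0], some ⟨(2, ![0, 2, 0]), rfl⟩),
    (![2, 0, 0], some ⟨(1, ![0, 0, 2]), rfl⟩),
    (![1, 0, 1], some ⟨(0, ![0, 0, 0]), rfl⟩),
    (![2, 0, 1], none),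
    (![1, 0, 2], some ⟨(0, ![0, 0, 1]), rfl⟩),
    (![2, 0, 2], some ⟨(2, ![1, 0, 0]), rfl⟩),
    (![1, 1, 0], some ⟨(2, ![2, 0, 0]), rfl⟩),
    (![1, 2, 0], some ⟨(0, ![0, 0, 2]), rfl⟩),
    (![2, 1, 0], some ⟨(1, ![1, 0, 0]), rfl⟩),
    (![2, 2, 0], some ⟨(0, ![0, 1, 0]), rfl⟩),
    (![1, 1, 1], some ⟨(1, ![2, 0, 0]), rfl⟩),
    (![2, 1, 1], some ⟨(0, ![0, 2, 0]), rfl⟩),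
    (![1, 2, 1], some ⟨(0, ![0, 1, 1]), rfl⟩),
    (![1, 1, 2], some ⟨(1, ![1, 0, 1]), rfl⟩),
    (![2, 2, 1], some ⟨(2, ![1, 1, 0]), rfl⟩),
    (![2, 1, 2], some ⟨(0, ![0, 2, 1]), rfl⟩),
    (![1, 2, 2], some ⟨(0, ![0, 1, 2]), rfl⟩),
    (![2, 2, 2], some ⟨(1, ![1, 0, 2]), rfl⟩)]

theorem baseTable_fst_bijective : Function.Bijective fun i => (baseTable i).1 := by
  decide

noncomputable def base : PreyAssignment 3 where
  rank := (Equiv.ofBijective _ baseTable_fst_bijective).symm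
  line v := (baseTable ((Equiv.ofBijective _ baseTable_fst_bijective).symm v)).2
  line_injective u v ℓ hu hv := by
    have h : ∀ i j : Fin 27, (baseTable i).2 = (baseTable j).2 →
        (baseTable i).2 = none ∨ i = j := by
      decide
    rcases h _ _ (hu.trans hv.symm) with h | h
    · exact absurd (hu.symm.trans h) (Option.some_ne_none ℓ)
    · exact (Equiv.ofBijective _ baseTable_fst_bijective).symm.injective h
  rank_point_lt v ℓ hv c := by
    have h : ∀ i : Fin 27, ∀ c, ∀ ℓ ∈ (baseTable i).2, ∃ k < i, (baseTable k).1 = ℓ.point c := by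
      decide
    obtain ⟨k, hk, hkℓ⟩ := h _ c ℓ hv
    rwa [← hkℓ, Equiv.ofBijective_symm_apply_apply]

theorem card_base_line_eq_none : #{v | base.line v = none} = 6 := by
  rw [card_equiv base.rank (t := {i | (baseTable i).2 = none})
    fun v => by simp only [mem_filter, mem_univ, true_and]; rfl]
  decide

theorem exists_card_line_eq_none_le (n : ℕ) (hn : 3 ≤ n) :
    ∃ S : PreyAssignment n, #{v | S.line v = none} ≤ 6 := by
  induction n, hn using Nat.le_induction with
  | base => exact ⟨base, card_base_line_eq_none.le⟩
  | succ n hn ih =>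
    obtain ⟨S, hS⟩ := ih
    obtain ⟨T, hT⟩ := S.exists_succ_card_line_eq_none_eq hn
    exact ⟨T, hT ▸ hS⟩

end PreyAssignment

theorem competitionNumber_Hn3_upper (n : ℕ) (hn : 3 ≤ n) :
    competitionNumber (hammingGraph n 3) ≤ (n - 3) * 3 ^ (n - 1) + 6 := by
  obtain ⟨S, hS⟩ := PreyAssignment.exists_card_line_eq_none_le n hn
  calc competitionNumber (hammingGraph n 3)
      ≤ #{ℓ | ∀ v, S.line v ≠ some ℓ} := S.competitionNumber_le
    _ = (n - 3) * 3 ^ (n - 1) + #{v | S.line v = none} := S.card_unassigned hn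
    _ ≤ (n - 3) * 3 ^ (n - 1) + 6 := Nat.add_le_add_left hS _
end

section
/- Let n ≥ 3 and let G be a subgraph of the ternary Hamming graph H(n,3) on 10 vertices. Then the number of triangles in G is at most 6. -/
open SimpleGraph

/-! Split a point set `P` of `H(n+1,3)` by the last coordinate into slices `P₀, P₁, P₂` of
`H(n,3)`. A triangle of `P` either lies in one slice, where it is again a triangle, or is a full
line `{w} × Fin 3` in the last direction, and then `w` lies in all three slices. Hence
`T(P) ≤ T(P₀) + T(P₁) + T(P₂) + min |Pₐ|`, and induction on `n` gives `T(P) ≤ f(|P|)` for any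
`f` with `f(a) + f(b) + f(c) + min(a, b, c) ≤ f(a + b + c)`; the table `triangleBound` is such an
`f` on `[0, 10]` (checked exhaustively) with `f(10) = 6`. -/

open Finset

variable {n q : ℕ}

lemma hammingDist_snoc {α : Type*} [DecidableEq α] (x y : Fin n → α) (a b : α) :
    hammingDist (Fin.snoc x a : Fin (n + 1) → α) (Fin.snoc y b) =
      hammingDist x y + if a = b then 0 else 1 := by
  simp only [hammingDist, card_filter, Fin.sum_univ_castSucc, Fin.snoc_castSucc, Fin.snoc_last,
    ite_not]

instance : DecidableRel (hammingGraph n q).Adj :=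
  fun x y => inferInstanceAs (Decidable (hammingDist x y = 1))

lemma hammingGraph_adj_snoc {x y : Fin n → Fin q} {a b : Fin q} :
    (hammingGraph (n + 1) q).Adj (Fin.snoc x a) (Fin.snoc y b) ↔
      (hammingGraph n q).Adj x y ∧ a = b ∨ x = y ∧ a ≠ b := by
  change hammingDist _ _ = 1 ↔ hammingDist x y = 1 ∧ a = b ∨ x = y ∧ a ≠ b
  rw [hammingDist_snoc, ← hammingDist_eq_zero]
  split_ifs <;> simp_all

lemma hammingGraph_isNClique_three_snoc {t : Finset (Fin (n + 1) → Fin q)}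
    (ht : (hammingGraph (n + 1) q).IsNClique 3 t) :
    (∃ a s, (hammingGraph n q).IsNClique 3 s ∧ t = s.image (Fin.snoc · a)) ∨
      ∃ w, ∃ s : Finset (Fin q), #s = 3 ∧ t = s.image (Fin.snoc w) := by
  obtain ⟨x, y, z, hxy, hxz, hyz, rfl⟩ := is3Clique_iff.mp ht
  obtain ⟨x, a, rfl⟩ : ∃ x' a, x = Fin.snoc x' a := ⟨_, _, (Fin.snoc_init_self x).symm⟩
  obtain ⟨y, b, rfl⟩ : ∃ y' b, y = Fin.snoc y' b := ⟨_, _, (Fin.snoc_init_self y).symm⟩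
  obtain ⟨z, c, rfl⟩ : ∃ z' c, z = Fin.snoc z' c := ⟨_, _, (Fin.snoc_init_self z).symm⟩
  rw [hammingGraph_adj_snoc] at hxy hxz hyz
  rcases hxy with ⟨hxy, rfl⟩ | ⟨rfl, hab⟩
  · obtain ⟨hxz', hyz', rfl⟩ :
        (hammingGraph n q).Adj x z ∧ (hammingGraph n q).Adj y z ∧ a = c := by
      grind [Adj.ne]
    exact Or.inl ⟨a, {x, y, z}, is3Clique_iff.mpr ⟨x, y, z, hxy, hxz', hyz', rfl⟩, by simp⟩
  · obtain ⟨rfl, hac, hbc⟩ : x = z ∧ a ≠ c ∧ b ≠ c := by grind [Adj.ne]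
    exact Or.inr ⟨x, {a, b, c}, card_eq_three.mpr ⟨a, b, c, hab, hac, hbc, rfl⟩, by simp⟩

def hammingTriangles (P : Finset (Fin n → Fin q)) : Finset (Finset (Fin n → Fin q)) :=
  {t ∈ (hammingGraph n q).cliqueFinset 3 | t ⊆ P}

lemma card_hammingTriangles_le_choose (P : Finset (Fin n → Fin q)) :
    #(hammingTriangles P) ≤ (#P).choose 3 := by
  rw [← card_powersetCard]
  exact card_le_card fun t ht => mem_powersetCard.mpr
    ⟨(mem_filter.mp ht).2, (mem_cliqueFinset_iff.mp (mem_filter.mp ht).1).card_eq⟩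

lemma setOf_triangle_subset_hammingTriangles {G : (hammingGraph n q).Subgraph}
    {P : Finset (Fin n → Fin q)} (hGP : G.verts ⊆ P) :
    {t : Finset (Fin n → Fin q) | #t = 3 ∧ ∀ u ∈ t, ∀ v ∈ t, u ≠ v → G.Adj u v} ⊆
      ↑(hammingTriangles P) := by
  rintro t ⟨ht3, htG⟩
  refine mem_filter.mpr ⟨mem_cliqueFinset_iff.mpr ⟨?_, ht3⟩, fun u hu => ?_⟩
  · exact fun _ hu _ hw huw => G.adj_sub (htG _ hu _ hw huw)
  · obtain ⟨w, hw, hwu⟩ := exists_mem_ne (by omega : 1 < #t) u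
    exact hGP (G.edge_vert (htG u hu w hw hwu.symm))

def sliceLast (P : Finset (Fin (n + 1) → Fin q)) (a : Fin q) : Finset (Fin n → Fin q) :=
  {w | Fin.snoc w a ∈ P}

@[simp]
lemma mem_sliceLast {P : Finset (Fin (n + 1) → Fin q)} {a : Fin q} {w : Fin n → Fin q} :
    w ∈ sliceLast P a ↔ Fin.snoc w a ∈ P := by
  simp [sliceLast]

lemma image_sliceLast (P : Finset (Fin (n + 1) → Fin q)) (a : Fin q) :
    (sliceLast P a).image (Fin.snoc · a) = {x ∈ P | x (Fin.last n) = a} := by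
  ext x
  obtain ⟨w, b, rfl⟩ : ∃ w b, x = Fin.snoc w b := ⟨_, _, (Fin.snoc_init_self x).symm⟩
  simp only [mem_image, mem_sliceLast, mem_filter, Fin.snoc_last, Fin.snoc_inj]
  constructor
  · rintro ⟨v, h, rfl, rfl⟩
    exact ⟨h, rfl⟩
  · rintro ⟨h, rfl⟩
    exact ⟨w, h, rfl, rfl⟩

lemma sum_card_sliceLast (P : Finset (Fin (n + 1) → Fin q)) :
    ∑ a, #(sliceLast P a) = #P := by
  rw [card_eq_sum_card_fiberwise (f := (· (Fin.last n))) (t := univ) (by simp)]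
  refine sum_congr rfl fun a _ => ?_
  rw [← image_sliceLast, card_image_of_injective _ (Fin.snoc_left_injective _)]

lemma hammingTriangles_subset_sliceLast (P : Finset (Fin (n + 1) → Fin 3)) :
    hammingTriangles P ⊆
      (univ.biUnion fun a =>
          (hammingTriangles (sliceLast P a)).image (·.image (Fin.snoc · a))) ∪
        (univ.inf (sliceLast P)).image fun w => univ.image (Fin.snoc w) := by
  intro t ht
  rw [hammingTriangles, mem_filter, mem_cliqueFinset_iff] at ht
  obtain ⟨ht, htP⟩ := ht
  rcases hammingGraph_isNClique_three_snoc ht with ⟨a, s, hs, rfl⟩ | ⟨w, s, hs, rfl⟩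
  · refine mem_union_left _ (mem_biUnion.mpr ⟨a, mem_univ a, mem_image.mpr ⟨s, ?_, rfl⟩⟩)
    refine mem_filter.mpr ⟨mem_cliqueFinset_iff.mpr hs, fun w hw => ?_⟩
    exact mem_sliceLast.mpr (htP (mem_image_of_mem _ hw))
  · obtain rfl : s = univ := eq_univ_of_card s (by simp [hs])
    refine mem_union_right _ (mem_image.mpr ⟨w, mem_inf.mpr fun a _ => ?_, rfl⟩)
    exact mem_sliceLast.mpr (htP (mem_image_of_mem _ (mem_univ a)))

lemma card_hammingTriangles_le_sum_sliceLast (P : Finset (Fin (n + 1) → Fin 3)) :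
    #(hammingTriangles P) ≤
      ∑ a, #(hammingTriangles (sliceLast P a)) + #(univ.inf (sliceLast P)) := by
  refine (card_le_card (hammingTriangles_subset_sliceLast P)).trans ((card_union_le _ _).trans ?_)
  gcongr
  · exact card_biUnion_le.trans (sum_le_sum fun _ _ => card_image_le)
  · exact card_image_le

def triangleBound : ℕ → ℕ
  | 0 | 1 | 2 => 0
  | 3 | 4 => 1
  | 5 | 6 => 2
  | 7 => 3
  | 8 => 4
  | _ => 6

lemma triangleBound_add_add (a b c : ℕ) (h : a + b + c ≤ 10) :
    triangleBound a + triangleBound b + triangleBound c + min a (min b c) ≤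
      triangleBound (a + b + c) := by
  have key : ∀ a < 11, ∀ b < 11, ∀ c < 11, a + b + c ≤ 10 →
      triangleBound a + triangleBound b + triangleBound c + min a (min b c) ≤
        triangleBound (a + b + c) := by decide
  exact key a (by omega) b (by omega) c (by omega) h

lemma card_hammingTriangles_le (P : Finset (Fin n → Fin 3)) (hP : #P ≤ 10) :
    #(hammingTriangles P) ≤ triangleBound #P := by
  induction n with
  | zero =>
    have hP₁ : #P ≤ 1 := card_le_univ P
    calc #(hammingTriangles P)
      _ ≤ (#P).choose 3 := card_hammingTriangles_le_choose P
      _ = 0 := Nat.choose_eq_zero_of_lt (by omega)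
      _ ≤ _ := Nat.zero_le _
  | succ n ih =>
    have hsum := sum_card_sliceLast P
    rw [Fin.sum_univ_three] at hsum
    calc #(hammingTriangles P)
      _ ≤ ∑ a, #(hammingTriangles (sliceLast P a)) + #(univ.inf (sliceLast P)) :=
        card_hammingTriangles_le_sum_sliceLast P
      _ ≤ ∑ a, triangleBound #(sliceLast P a) +
          min #(sliceLast P 0) (min #(sliceLast P 1) #(sliceLast P 2)) := by
        gcongr with a
        · exact ih _ (by fin_cases a <;> simp <;> omega)
        · exact le_min (card_le_card (inf_le (mem_univ 0))) (le_min
            (card_le_card (inf_le (mem_univ 1))) (card_le_card (inf_le (mem_univ 2))))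
      _ ≤ triangleBound #P := by
        rw [Fin.sum_univ_three, ← hsum]
        exact triangleBound_add_add _ _ _ (hsum ▸ hP)

theorem triangles_le_six_general (n : ℕ)
    (G : (hammingGraph n 3).Subgraph) (hv : G.verts.ncard = 10) :
    {t : Finset (Fin n → Fin 3) |
      t.card = 3 ∧ ∀ u ∈ t, ∀ v ∈ t, u ≠ v → G.Adj u v}.ncard ≤ 6 := by
  obtain ⟨P, hPG⟩ := (Set.finite_of_ncard_ne_zero (s := G.verts) (by omega)).exists_finset_coe
  have hP : #P = 10 := by rw [← hv, ← hPG, Set.ncard_coe_finset]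
  calc _ ≤ (hammingTriangles P : Set (Finset (Fin n → Fin 3))).ncard :=
        Set.ncard_le_ncard (setOf_triangle_subset_hammingTriangles hPG.ge) (finite_toSet _)
    _ = #(hammingTriangles P) := Set.ncard_coe_finset _
    _ ≤ triangleBound #P := card_hammingTriangles_le P hP.le
    _ = 6 := by rw [hP]; rfl

theorem triangles_le_six (n : ℕ) (hn : 3 ≤ n)
    (G : (hammingGraph n 3).Subgraph) (hv : G.verts.ncard = 10) :
    {t : Finset (Fin n → Fin 3) |
      t.card = 3 ∧ ∀ u ∈ t, ∀ v ∈ t, u ≠ v → G.Adj u v}.ncard ≤ 6 :=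
  triangles_le_six_general n G hv
end

section
/- For every n ≥ 3, the competition number of the ternary Hamming graph H(n,3) is at least (n−3)·3^{n−1} + 6. -/
open SimpleGraph

/-!
Each line `Sset j p` of `H(n,3)` is a maximal clique, so it needs a prey: a vertex whose
in-neighbours are at least two points of that line and nothing else. Distinct lines have distinct
preys, which gives `n * 3 ^ (n - 1)` preys. Rank the vertices along the acyclic digraph and cut at
the 13th highest vertex of `H(n,3)`. A prey above the cut has all its in-neighbours among the 12
highest vertices of `H(n,3)`, and 12 points contain at most 7 lines, so at least 6 of the 13 or more
vertices above the cut are not preys. Hence `n * 3 ^ (n - 1) + 6 ≤ 3 ^ n + k`.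
-/

open Finset Function

namespace HammingCompetition

theorem hammingDist_eq_one_iff {ι : Type*} [Fintype ι] {β : ι → Type*} [∀ i, DecidableEq (β i)]
    {x y : ∀ i, β i} : hammingDist x y = 1 ↔ ∃ j, x j ≠ y j ∧ ∀ i ≠ j, x i = y i := by
  simp only [hammingDist, card_eq_one, Finset.ext_iff, mem_filter, mem_univ, true_and,
    mem_singleton]
  refine exists_congr fun j => ⟨fun h => ⟨(h j).2 rfl, fun i hi => ?_⟩, fun ⟨hj, h⟩ i => ?_⟩
  · by_contra hne
    exact hi ((h i).1 hne)
  · exact ⟨fun hne => by_contra fun hi => hne (h i hi), fun hi => hi ▸ hj⟩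

section Lines

variable {n q : ℕ} {j j' : Fin n} {p p' a b c : Fin n → Fin q}

theorem update_mem_Sset (j : Fin n) (p : Fin n → Fin q) (s : Fin q) : update p j s ∈ Sset j p :=
  fun _ hi => update_of_ne hi s p

theorem eq_of_mem_Sset (ha : a ∈ Sset j p) (hb : b ∈ Sset j p) (hab : a j = b j) : a = b :=
  funext fun i => if hi : i = j then hi ▸ hab else (ha i hi).trans (hb i hi).symm

theorem hammingDist_eq_one_of_mem_Sset (ha : a ∈ Sset j p) (hb : b ∈ Sset j p) (hab : a ≠ b) :
    hammingDist a b = 1 :=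
  hammingDist_eq_one_iff.2
    ⟨j, fun h => hab (eq_of_mem_Sset ha hb h), fun i hi => (ha i hi).trans (hb i hi).symm⟩

theorem mem_Sset_of_hammingDist_eq_one (ha : a ∈ Sset j p) (hb : b ∈ Sset j p) (hab : a ≠ b)
    (hca : hammingDist c a = 1) (hcb : hammingDist c b = 1) : c ∈ Sset j p := by
  have habj : a j ≠ b j := fun h => hab (eq_of_mem_Sset ha hb h)
  obtain ⟨i, hi, hca⟩ := hammingDist_eq_one_iff.1 hca
  obtain ⟨i', hi', hcb⟩ := hammingDist_eq_one_iff.1 hcb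
  obtain rfl : i = j := by
    by_contra hij
    obtain rfl : i' = j := by
      by_contra hi'j
      exact habj ((hca j (Ne.symm hij)).symm.trans (hcb j (Ne.symm hi'j)))
    exact hi ((hcb i hij).trans ((ha i hij).trans (hb i hij).symm).symm)
  exact fun k hk => (hca k hk).trans (ha k hk)

theorem eq_of_two_mem_Sset [NeZero q] (hab : a ≠ b) (hp : p j = 0) (hp' : p' j' = 0)
    (ha : a ∈ Sset j p) (hb : b ∈ Sset j p) (ha' : a ∈ Sset j' p') (hb' : b ∈ Sset j' p') :
    (j, p) = (j', p') := by
  obtain rfl : j = j' := by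
    by_contra hjj
    exact hab (eq_of_mem_Sset ha hb ((ha' j hjj).trans (hb' j hjj).symm))
  refine Prod.ext rfl (funext fun i => ?_)
  by_cases hi : i = j
  · exact hi ▸ hp.trans hp'.symm
  · exact (ha i hi).symm.trans (ha' i hi)

end Lines

/-- The lines of `H(n,3)`, each listed once as `Sset j p` with the normalization `p j = 0`. -/
def lines (n : ℕ) : Finset (Fin n × (Fin n → Fin 3)) :=
  {ℓ | ℓ.2 ℓ.1 = 0}

theorem card_lines (n : ℕ) : #(lines n) = n * 3 ^ (n - 1) := by
  rw [lines, card_filter, Fintype.sum_prod_type]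
  have hfiber (j : Fin n) : #{p : Fin n → Fin 3 | p j = 0} = 3 ^ (n - 1) := by
    simpa using Fintype.card_filter_piFinset_const_eq_of_mem _ j (mem_univ (0 : Fin 3))
  simp [hfiber]

section Layers

variable {n : ℕ}

def linesIn (P : Finset (Fin n → Fin 3)) : Finset (Fin n × (Fin n → Fin 3)) :=
  {ℓ ∈ lines n | ∀ s, update ℓ.2 ℓ.1 s ∈ P}

def layer (P : Finset (Fin (n + 1) → Fin 3)) (a : Fin 3) : Finset (Fin n → Fin 3) :=
  {g | Fin.cons a g ∈ P}

@[simp]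
theorem mem_layer {P : Finset (Fin (n + 1) → Fin 3)} {a : Fin 3} {g : Fin n → Fin 3} :
    g ∈ layer P a ↔ Fin.cons a g ∈ P := by
  simp [layer]

theorem sum_card_layer (P : Finset (Fin (n + 1) → Fin 3)) : ∑ a, #(layer P a) = #P := by
  rw [← card_sigma]
  refine card_nbij' (fun s => Fin.cons s.1 s.2) (fun f => ⟨f 0, Fin.tail f⟩) ?_ ?_ ?_ ?_ <;>
    intro x hx <;> simp_all

/-- A line of `H(n+1,3)` inside `P` either runs along the first coordinate, and then its
projection lies in all three layers, or it lies inside a single layer. -/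
theorem card_linesIn_succ_le (P : Finset (Fin (n + 1) → Fin 3)) :
    #(linesIn P) ≤ #(layer P 0 ∩ layer P 1 ∩ layer P 2) + ∑ a, #(linesIn (layer P a)) := by
  let split (ℓ : Fin (n + 1) × (Fin (n + 1) → Fin 3)) :
      (Fin n → Fin 3) ⊕ (Σ _ : Fin 3, Fin n × (Fin n → Fin 3)) :=
    Fin.cases (.inl (Fin.tail ℓ.2)) (fun i => .inr ⟨ℓ.2 0, i, Fin.tail ℓ.2⟩) ℓ.1
  let unsplit : (Fin n → Fin 3) ⊕ (Σ _ : Fin 3, Fin n × (Fin n → Fin 3)) →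
      Fin (n + 1) × (Fin (n + 1) → Fin 3) :=
    Sum.elim (fun g => (0, Fin.cons 0 g)) (fun s => (s.2.1.succ, Fin.cons s.1 s.2.2))
  have hinv : Set.LeftInvOn unsplit split (linesIn P) := by
    rintro ⟨j, p⟩ hℓ
    simp only [linesIn, lines, mem_coe, mem_filter, mem_univ, true_and] at hℓ
    cases j using Fin.cases with
    | zero => simp [split, unsplit, ← hℓ.1]
    | succ i => simp [split, unsplit]
  rw [← card_sigma, ← card_disjSum]
  refine card_le_card_of_injOn split (fun ℓ hℓ => ?_) hinv.injOn
  obtain ⟨j, p⟩ := ℓ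
  simp only [linesIn, lines, mem_coe, mem_filter, mem_univ, true_and] at hℓ
  obtain ⟨hp, hP⟩ := hℓ
  cases j using Fin.cases with
  | zero =>
    simp only [split, Fin.cases_zero, mem_coe, inl_mem_disjSum, mem_inter, mem_layer]
    rw [← Fin.cons_self_tail p] at hP
    simp only [Fin.update_cons_zero] at hP
    exact ⟨⟨hP 0, hP 1⟩, hP 2⟩
  | succ i =>
    simp only [split, Fin.cases_succ, mem_coe, inr_mem_disjSum, mem_sigma, mem_univ, true_and,
      linesIn, lines, mem_filter, mem_layer, Fin.cons_update, Fin.cons_self_tail]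
    exact ⟨hp, hP⟩

end Layers

/-- An upper bound for the number of lines inside `m ≤ 12` points of `H(n,3)`, tabulated so as to
satisfy the layer recursion `lineBound_layers`. -/
def lineBound : ℕ → ℕ
  | 0 => 0 | 1 => 0 | 2 => 0 | 3 => 1 | 4 => 1 | 5 => 2 | 6 => 2
  | 7 => 3 | 8 => 4 | 9 => 6 | 10 => 6 | 11 => 7 | _ => 7

theorem lineBound_layers {a b c : ℕ} (h : a + b + c ≤ 12) :
    min a (min b c) + (lineBound a + lineBound b + lineBound c) ≤ lineBound (a + b + c) := by
  have key : ∀ a b c : Fin 13, a.1 + b.1 + c.1 ≤ 12 → min a.1 (min b.1 c.1) +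
      (lineBound a + lineBound b + lineBound c) ≤ lineBound (a.1 + b.1 + c.1) := by
    decide
  exact key ⟨a, by omega⟩ ⟨b, by omega⟩ ⟨c, by omega⟩ h

theorem card_linesIn_le_lineBound {n : ℕ} (P : Finset (Fin n → Fin 3)) (hP : #P ≤ 12) :
    #(linesIn P) ≤ lineBound #P := by
  induction n with
  | zero => simp [linesIn, lines]
  | succ n ih =>
    have hsum := sum_card_layer P
    rw [Fin.sum_univ_three] at hsum
    have hC : #(layer P 0 ∩ layer P 1 ∩ layer P 2) ≤
        min #(layer P 0) (min #(layer P 1) #(layer P 2)) :=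
      le_min (card_le_card (inter_subset_left.trans inter_subset_left))
        (le_min (card_le_card (inter_subset_left.trans inter_subset_right))
          (card_le_card inter_subset_right))
    calc #(linesIn P)
        ≤ #(layer P 0 ∩ layer P 1 ∩ layer P 2) + ∑ a, #(linesIn (layer P a)) :=
          card_linesIn_succ_le P
      _ ≤ min #(layer P 0) (min #(layer P 1) #(layer P 2)) +
          (lineBound #(layer P 0) + lineBound #(layer P 1) + lineBound #(layer P 2)) := by
          rw [Fin.sum_univ_three]
          gcongr <;> exact ih _ (by omega)
      _ ≤ lineBound #P := hsum ▸ lineBound_layers (by omega)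

theorem card_linesIn_le_seven {n : ℕ} (P : Finset (Fin n → Fin 3)) (hP : #P ≤ 12) :
    #(linesIn P) ≤ 7 :=
  (card_linesIn_le_lineBound P hP).trans <| by interval_cases #P <;> decide

section Competition

variable {V : Type*} {k : ℕ} {G : SimpleGraph V} {D : V ⊕ Fin k → V ⊕ Fin k → Prop}

theorem exists_common_outNeighbor (hDG : competitionGraph D = addIsolated G k) {a b : V}
    (hab : G.Adj a b) : ∃ x, D (.inl a) x ∧ D (.inl b) x := by
  have : (addIsolated G k).Adj (.inl a) (.inl b) := ⟨a, b, rfl, rfl, hab⟩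
  rw [← hDG] at this
  exact this.2

theorem adj_of_common_outNeighbor (hDG : competitionGraph D = addIsolated G k) {w x} {a : V}
    (hw : D w x) (ha : D (.inl a) x) (hne : w ≠ .inl a) : ∃ c, w = .inl c ∧ G.Adj c a := by
  have : (competitionGraph D).Adj w (.inl a) := ⟨hne, x, hw, ha⟩
  rw [hDG] at this
  obtain ⟨c, a', rfl, ha', hca⟩ := this
  exact ⟨c, rfl, Sum.inl_injective ha' ▸ hca⟩

end Competition

section Prey

variable {n q k : ℕ} {D : (Fin n → Fin q) ⊕ Fin k → (Fin n → Fin q) ⊕ Fin k → Prop}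
  {j j' : Fin n} {p p' : Fin n → Fin q} {x : (Fin n → Fin q) ⊕ Fin k}

def IsPrey (D : (Fin n → Fin q) ⊕ Fin k → (Fin n → Fin q) ⊕ Fin k → Prop) (j : Fin n)
    (p : Fin n → Fin q) (x : (Fin n → Fin q) ⊕ Fin k) : Prop :=
  inNbhd D x ⊆ .inl '' Sset j p ∧ ∃ a b, a ≠ b ∧ D (.inl a) x ∧ D (.inl b) x

theorem IsPrey.unique [NeZero q] (h : IsPrey D j p x) (h' : IsPrey D j' p' x) (hp : p j = 0)
    (hp' : p' j' = 0) : (j, p) = (j', p') := by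
  obtain ⟨hsub, a, b, hab, ha, hb⟩ := h
  obtain ⟨c, hc, hca⟩ := hsub ha
  obtain ⟨d, hd, hdb⟩ := hsub hb
  obtain ⟨c', hc', hc'a⟩ := h'.1 ha
  obtain ⟨d', hd', hd'b⟩ := h'.1 hb
  cases Sum.inl_injective hca; cases Sum.inl_injective hdb
  cases Sum.inl_injective hc'a; cases Sum.inl_injective hd'b
  exact eq_of_two_mem_Sset hab hp hp' hc hd hc' hd'

theorem exists_prey (hDG : competitionGraph D = addIsolated (hammingGraph n q) k)
    {a b : Fin n → Fin q} (ha : a ∈ Sset j p) (hb : b ∈ Sset j p) (hab : a ≠ b) :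
    ∃ x, D (.inl a) x ∧ IsPrey D j p x := by
  obtain ⟨x, hax, hbx⟩ :=
    exists_common_outNeighbor hDG (hammingDist_eq_one_of_mem_Sset ha hb hab)
  refine ⟨x, hax, fun w hw => ?_, a, b, hab, hax, hbx⟩
  by_cases hwa : w = .inl a
  · exact ⟨a, ha, hwa.symm⟩
  by_cases hwb : w = .inl b
  · exact ⟨b, hb, hwb.symm⟩
  obtain ⟨c, rfl, hca⟩ := adj_of_common_outNeighbor hDG hw hax hwa
  obtain ⟨c', hc', hcb⟩ := adj_of_common_outNeighbor hDG hw hbx hwb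
  cases Sum.inl_injective hc'
  exact ⟨c, mem_Sset_of_hammingDist_eq_one ha hb hab hca hcb, rfl⟩

end Prey

theorem exists_rank {α : Type*} [Finite α] {D : α → α → Prop} (hD : IsAcyclicDigraph D) :
    ∃ ρ : α → ℕ, ∀ u x, D u x → ρ x < ρ u := by
  refine ⟨fun u => {y | Relation.TransGen D u y}.ncard, fun u x hux => ?_⟩
  refine Set.ncard_lt_ncard ⟨fun y hy => Relation.TransGen.head hux hy, fun h => ?_⟩ (Set.toFinite _)
  exact hD x (h (Relation.TransGen.single hux))

theorem exists_threshold {β : Type*} [Fintype β] (f : β → ℕ) {m : ℕ}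
    (hm : m < Fintype.card β) : ∃ t, m < #{b | t ≤ f b} ∧ #{b | t < f b} ≤ m := by
  have hex : ∃ s, #{b | s ≤ f b} ≤ m :=
    ⟨univ.sup f + 1, by
      rw [filter_false_of_mem fun b _ => not_le.2 (Nat.lt_succ_of_le (le_sup (mem_univ b)))]
      simp⟩
  obtain ⟨t, ht⟩ : ∃ t, Nat.find hex = t + 1 :=
    Nat.exists_eq_succ_of_ne_zero fun h => by simpa [h, hm.not_ge] using Nat.find_spec hex
  refine ⟨t, not_le.1 (Nat.find_min hex (by omega)), ?_⟩
  simpa only [ht, Nat.succ_le_iff] using Nat.find_spec hex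

section Counting

variable {n k : ℕ} {D : (Fin n → Fin 3) ⊕ Fin k → (Fin n → Fin 3) ⊕ Fin k → Prop}

theorem exists_prey_of_rank (hDG : competitionGraph D = addIsolated (hammingGraph n 3) k)
    {ρ : (Fin n → Fin 3) ⊕ Fin k → ℕ} (hρ : ∀ u x, D u x → ρ x < ρ u) (t : ℕ) (j : Fin n)
    (p : Fin n → Fin 3) :
    ∃ x, IsPrey D j p x ∧ (t ≤ ρ x → ∀ s, t < ρ (.inl (update p j s))) := by
  have hne (s : Fin 3) : update p j s ≠ update p j (s + 1) := fun h => by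
    simpa using congrFun h j
  by_cases hline : ∀ s, t < ρ (.inl (update p j s))
  · obtain ⟨x, -, hx⟩ := exists_prey hDG (update_mem_Sset j p 0) (update_mem_Sset j p 1) (hne 0)
    exact ⟨x, hx, fun _ => hline⟩
  · obtain ⟨s, hs⟩ := not_forall.1 hline
    obtain ⟨x, hsx, hx⟩ :=
      exists_prey hDG (update_mem_Sset j p s) (update_mem_Sset j p (s + 1)) (hne s)
    exact ⟨x, hx, fun htx => absurd (htx.trans_lt (hρ _ _ hsx)) hs⟩

theorem card_lines_add_le (hn : 3 ≤ n) (hD : IsAcyclicDigraph D)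
    (hDG : competitionGraph D = addIsolated (hammingGraph n 3) k) :
    n * 3 ^ (n - 1) + 6 ≤ 3 ^ n + k := by
  classical
  obtain ⟨ρ, hρ⟩ := exists_rank hD
  have h13 : 12 < Fintype.card (Fin n → Fin 3) := by
    simpa using (by norm_num : 12 < 3 ^ 3).trans_le (Nat.pow_le_pow_right (by norm_num) hn)
  obtain ⟨t, habove, hZ⟩ := exists_threshold (fun v => ρ (.inl v)) h13
  choose φ hφ using fun ℓ : Fin n × (Fin n → Fin 3) => exists_prey_of_rank hDG hρ t ℓ.1 ℓ.2
  set S : Finset ((Fin n → Fin 3) ⊕ Fin k) := {w | t ≤ ρ w}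
  have hpreys : #((lines n).image φ) = n * 3 ^ (n - 1) := by
    rw [card_image_of_injOn, card_lines]
    rintro ⟨j, p⟩ hℓ ⟨j', p'⟩ hℓ' h
    simp only [lines, coe_filter, mem_univ, true_and, Set.mem_ofPred_eq] at hℓ hℓ'
    exact (hφ (j, p)).1.unique (h ▸ (hφ (j', p')).1) hℓ hℓ'
  have hS : 13 ≤ #S := by
    refine habove.trans_le (card_le_card_of_injOn Sum.inl (fun v hv => ?_) Sum.inl_injective.injOn)
    simpa [S] using hv
  have hpreysS : #((lines n).image φ ∩ S) ≤ 7 := by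
    calc #((lines n).image φ ∩ S) ≤ #((linesIn {v | t < ρ (.inl v)}).image φ) := by
          refine card_le_card fun x hx => ?_
          obtain ⟨hx, hxS⟩ := mem_inter.1 hx
          obtain ⟨ℓ, hℓ, rfl⟩ := mem_image.1 hx
          refine mem_image_of_mem φ (mem_filter.2 ⟨hℓ, ?_⟩)
          simpa using (hφ ℓ).2 (by simpa [S] using hxS)
      _ ≤ 7 := card_image_le.trans (card_linesIn_le_seven _ hZ)
  have hall : #((lines n).image φ ∪ S) ≤ 3 ^ n + k := by
    simpa using card_le_univ ((lines n).image φ ∪ S)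
  have := card_union_add_card_inter ((lines n).image φ) S
  omega

end Counting

section Realization

variable {V : Type*}

/-- One new vertex per clique of the cover, with the members of the clique as in-neighbours. -/
theorem exists_competitionGraph_eq_addIsolated {G : SimpleGraph V} {F : Finset (Finset V)}
    (hF : IsEdgeCliqueCover G F) :
    ∃ D : V ⊕ Fin #F → V ⊕ Fin #F → Prop,
      IsAcyclicDigraph D ∧ competitionGraph D = addIsolated G #F := by
  let D : V ⊕ Fin #F → V ⊕ Fin #F → Prop := fun x y =>
    ∃ u i, x = .inl u ∧ y = .inr i ∧ u ∈ (F.equivFin.symm i : Finset V)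
  refine ⟨D, fun v h => ?_, SimpleGraph.ext <| funext₂ fun x y => propext ⟨?_, ?_⟩⟩
  · obtain ⟨_, ⟨u, _, rfl, -⟩, -⟩ := Relation.TransGen.head'_iff.1 h
    obtain ⟨_, -, ⟨_, i, -, hi, -⟩⟩ := Relation.TransGen.tail'_iff.1 h
    exact Sum.inl_ne_inr hi
  · rintro ⟨hxy, z, ⟨u, i, rfl, rfl, hu⟩, ⟨v, i', rfl, hi, hv⟩⟩
    cases Sum.inr_injective hi
    exact ⟨u, v, rfl, rfl, hF.1 _ (F.equivFin.symm i).2 hu hv fun h => hxy (h ▸ rfl)⟩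
  · rintro ⟨u, v, rfl, rfl, huv⟩
    obtain ⟨S, hS, hu, hv⟩ := hF.2 u v huv
    refine ⟨fun h => huv.ne (Sum.inl_injective h), .inr (F.equivFin ⟨S, hS⟩), ?_, ?_⟩ <;>
      simpa [D]

theorem exists_isEdgeCliqueCover [Finite V] (G : SimpleGraph V) :
    ∃ F : Finset (Finset V), IsEdgeCliqueCover G F := by
  classical
  have := Fintype.ofFinite V
  refine ⟨(univ.filter fun e : V × V => G.Adj e.1 e.2).image fun e => {e.1, e.2}, ?_,
    fun u v huv => ?_⟩
  · simp only [mem_image, mem_filter, mem_univ, true_and]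
    rintro _ ⟨⟨u, v⟩, huv, rfl⟩
    simpa [SimpleGraph.isClique_pair] using fun _ => huv
  · refine ⟨{u, v}, mem_image_of_mem (fun e : V × V => {e.1, e.2}) (a := (u, v)) ?_, by simp,
      by simp⟩
    simpa using huv

theorem le_competitionNumber [Finite V] {G : SimpleGraph V} {m : ℕ}
    (h : ∀ k (D : V ⊕ Fin k → V ⊕ Fin k → Prop),
      IsAcyclicDigraph D → competitionGraph D = addIsolated G k → m ≤ k) :
    m ≤ competitionNumber G :=
  have ⟨_, hF⟩ := exists_isEdgeCliqueCover G
  le_csInf ⟨_, exists_competitionGraph_eq_addIsolated hF⟩ fun k ⟨D, hD, hDG⟩ => h k D hD hDG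

end Realization

end HammingCompetition

open HammingCompetition

theorem competitionNumber_Hn3_lower (n : ℕ) (hn : 3 ≤ n) :
    (n - 3) * 3 ^ (n - 1) + 6 ≤ competitionNumber (hammingGraph n 3) := by
  refine le_competitionNumber fun k D hD hDG => ?_
  have hbound := card_lines_add_le hn hD hDG
  have hpow : (n - 3) * 3 ^ (n - 1) + 3 ^ n = n * 3 ^ (n - 1) := by
    obtain ⟨m, rfl⟩ := Nat.exists_eq_add_of_le' hn
    rw [Nat.add_sub_cancel, show m + 3 - 1 = m + 2 by omega]
    ring
  omega
end
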